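/- arXiv:1710.04796 — 11 statements merged into one kernel-verified Lean document; each statement's English description precedes it below -/
import Mathlib

section
/- Suppose the curve F(x,y) = (y + P(x))^2 - Q(x) = 0, where P, Q are real polynomials with Q ≠ 0, is an invariant algebraic curve of the Liénard system ẋ = y, ẏ = -f(x)y - g(x), i.e. there exists K ∈ ℝ[x,y] with y·∂F/∂x - (f(x)y + g(x))·∂F/∂y = K·F, where f, g ∈ ℝ[x] have deg f = m and deg g = n ≥ 1. Then deg P = m + 1, the polynomial identities 2·Q·f = 2·Q·P' + P·Q' and 2·Q·g = Q'·(P^2 - Q) hold, and deg(P^2 - Q) = n + 1. -/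
open Polynomial

private lemma quad_coeff_eq {R : Type*} [CommRing R] {a b c a' b' c' : R}
    (h : Polynomial.C a * Polynomial.X ^ 2 + Polynomial.C b * Polynomial.X + Polynomial.C c
       = Polynomial.C a' * Polynomial.X ^ 2 + Polynomial.C b' * Polynomial.X + Polynomial.C c') :
    a = a' ∧ b = b' ∧ c = c' := by
  refine ⟨?_, ?_, ?_⟩
  · have := congrArg (fun p => Polynomial.coeff p 2) h
    simpa [coeff_X, coeff_C] using this
  · have := congrArg (fun p => Polynomial.coeff p 1) h
    simpa [coeff_X, coeff_C] using this
  · have := congrArg (fun p => Polynomial.coeff p 0) h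
    simpa [coeff_X, coeff_C] using this

/-- If `(y + P(x))² - Q(x) = 0` is an invariant algebraic curve of the Liénard system
`ẋ = y, ẏ = -f(x)y - g(x)` with `deg f = m`, `deg g = n ≥ 1`, then `deg P = m + 1`,
the identities `2Qf = 2QP' + PQ'` and `2Qg = Q'(P² - Q)` hold, and `deg(P² - Q) = n + 1`. -/
theorem lienard_hyperelliptic_invariant_curve_relations
    (m n : ℕ) (f g P Q : ℝ[X]) (hQ : Q ≠ 0)
    (hf : f.degree = (m : ℕ)) (hg : g.degree = (n : ℕ)) (hn : 1 ≤ n)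
    (F : MvPolynomial (Fin 2) ℝ)
    (hF : F = (MvPolynomial.X 1 + Polynomial.aeval (MvPolynomial.X 0) P) ^ 2
          - Polynomial.aeval (MvPolynomial.X 0) Q)
    (hinv : ∃ K : MvPolynomial (Fin 2) ℝ,
      MvPolynomial.X 1 * MvPolynomial.pderiv 0 F
        - (Polynomial.aeval (MvPolynomial.X 0) f * MvPolynomial.X 1
            + Polynomial.aeval (MvPolynomial.X 0) g) * MvPolynomial.pderiv 1 F
      = K * F) :
    P.degree = ((m + 1 : ℕ) : WithBot ℕ) ∧
    2 * Q * f = 2 * Q * derivative P + P * derivative Q ∧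
    2 * Q * g = derivative Q * (P ^ 2 - Q) ∧
    (P ^ 2 - Q).degree = ((n + 1 : ℕ) : WithBot ℕ) := by
  obtain ⟨K, hK⟩ := hinv
  -- basic nonvanishing
  have hf0 : f ≠ 0 := fun h => by simp [h] at hf
  have hg0 : g ≠ 0 := fun h => by simp [h] at hg
  have hfdeg : f.natDegree = m := natDegree_eq_of_degree_eq_some hf
  have hgdeg : g.natDegree = n := natDegree_eq_of_degree_eq_some hg
  -- partial derivatives of aeval (X 0) R
  have h0 : ∀ R : ℝ[X], (MvPolynomial.pderiv (R := ℝ) (0 : Fin 2))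
      (Polynomial.aeval (MvPolynomial.X 0) R)
      = Polynomial.aeval (MvPolynomial.X 0) (derivative R) := by
    intro R
    rw [Derivation.map_aeval, MvPolynomial.pderiv_X_self, smul_eq_mul, mul_one]
  have h1 : ∀ R : ℝ[X], (MvPolynomial.pderiv (R := ℝ) (1 : Fin 2))
      (Polynomial.aeval (MvPolynomial.X 0) R) = 0 := by
    intro R
    rw [Derivation.map_aeval, MvPolynomial.pderiv_X_of_ne (by decide), smul_zero]
  have hd0 : (MvPolynomial.pderiv (R := ℝ) (0 : Fin 2)) F
      = 2 * (MvPolynomial.X 1 + Polynomial.aeval (MvPolynomial.X 0) P)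
          * Polynomial.aeval (MvPolynomial.X 0) (derivative P)
        - Polynomial.aeval (MvPolynomial.X 0) (derivative Q) := by
    rw [hF, pow_two, map_sub, Derivation.leibniz]
    simp only [map_add, h0, h1, MvPolynomial.pderiv_X_self,
      MvPolynomial.pderiv_X_of_ne (show (1:Fin 2) ≠ 0 by decide), smul_eq_mul]
    ring
  have hd1 : (MvPolynomial.pderiv (R := ℝ) (1 : Fin 2)) F
      = 2 * (MvPolynomial.X 1 + Polynomial.aeval (MvPolynomial.X 0) P) := by
    rw [hF, pow_two, map_sub, Derivation.leibniz]
    simp only [map_add, h0, h1, MvPolynomial.pderiv_X_self,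
      MvPolynomial.pderiv_X_of_ne (show (0:Fin 2) ≠ 1 by decide), smul_eq_mul]
    ring
  rw [hd0, hd1, hF] at hK
  -- transfer to ℝ[x][y]
  set φ : MvPolynomial (Fin 2) ℝ →ₐ[ℝ] Polynomial (Polynomial ℝ) :=
    MvPolynomial.aeval ![Polynomial.C Polynomial.X, Polynomial.X] with hφ
  have hkey : ∀ R : ℝ[X], φ (Polynomial.aeval (MvPolynomial.X 0) R) = Polynomial.C R := by
    intro R
    rw [show φ (Polynomial.aeval (MvPolynomial.X 0) R)
        = Polynomial.aeval (φ (MvPolynomial.X 0)) R from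
      (Polynomial.aeval_algHom_apply φ (MvPolynomial.X 0) R).symm]
    have h1 : φ (MvPolynomial.X 0) = Polynomial.C Polynomial.X := by simp [hφ]
    rw [h1, show (Polynomial.C (Polynomial.X (R := ℝ)))
        = (Polynomial.CAlgHom (R := ℝ)) Polynomial.X from rfl,
      Polynomial.aeval_algHom_apply, Polynomial.aeval_X_left_apply]
    rfl
  have hX1 : φ (MvPolynomial.X 1) = Polynomial.X := by simp [hφ]
  have hmain := congrArg φ hK
  simp only [map_mul, map_sub, map_add, map_pow, map_ofNat, hkey, hX1] at hmain
  set K' : Polynomial (Polynomial ℝ) := φ K with hK'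
  -- canonical quadratic forms
  set a : ℝ[X] := 2 * derivative P - 2 * f with ha
  set b : ℝ[X] := 2 * P * derivative P - derivative Q - 2 * f * P - 2 * g with hb
  set c : ℝ[X] := -(2 * g * P) with hc
  have hL : Polynomial.X * (2 * (Polynomial.X + Polynomial.C P) * Polynomial.C (derivative P)
        - Polynomial.C (derivative Q))
      - (Polynomial.C f * Polynomial.X + Polynomial.C g)
          * (2 * (Polynomial.X + Polynomial.C P))
      = Polynomial.C a * Polynomial.X ^ 2 + Polynomial.C b * Polynomial.X + Polynomial.C c := by
    simp only [ha, hb, hc, C_sub, C_add, C_mul, C_neg, map_ofNat]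
    ring
  have hG : (Polynomial.X + Polynomial.C P) ^ 2 - Polynomial.C Q
      = Polynomial.X ^ 2 + Polynomial.C (2 * P) * Polynomial.X + Polynomial.C (P ^ 2 - Q) := by
    simp only [C_sub, C_add, C_mul, C_pow, map_ofNat]
    ring
  rw [hL, hG] at hmain
  -- the cofactor is a constant in y
  have hGmonic : ((Polynomial.X : Polynomial (Polynomial ℝ)) ^ 2
      + Polynomial.C (2 * P) * Polynomial.X + Polynomial.C (P ^ 2 - Q)).Monic := by
    have : ((Polynomial.X : Polynomial (Polynomial ℝ)) ^ 2
        + Polynomial.C (2 * P) * Polynomial.X + Polynomial.C (P ^ 2 - Q))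
        = Polynomial.X ^ (1 + 1) + (Polynomial.C (2 * P) * Polynomial.X
            + Polynomial.C (P ^ 2 - Q)) := by ring
    rw [this]
    exact monic_X_pow_add (degree_linear_le.trans_lt
      (by exact_mod_cast WithBot.coe_lt_coe.mpr (by norm_num)))
  have hGdeg : ((Polynomial.X : Polynomial (Polynomial ℝ)) ^ 2
      + Polynomial.C (2 * P) * Polynomial.X + Polynomial.C (P ^ 2 - Q)).natDegree = 2 := by
    have h2 : ((Polynomial.X : Polynomial (Polynomial ℝ)) ^ 2
        + Polynomial.C (2 * P) * Polynomial.X + Polynomial.C (P ^ 2 - Q)).degree = 2 := by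
      have : ((Polynomial.X : Polynomial (Polynomial ℝ)) ^ 2
          + Polynomial.C (2 * P) * Polynomial.X + Polynomial.C (P ^ 2 - Q))
          = Polynomial.C 1 * Polynomial.X ^ 2
            + Polynomial.C (2 * P) * Polynomial.X + Polynomial.C (P ^ 2 - Q) := by
        rw [map_one]; ring
      rw [this]
      exact degree_quadratic (one_ne_zero)
    exact natDegree_eq_of_degree_eq_some h2
  set k : ℝ[X] := K'.coeff 0 with hk
  have hKC : K' = Polynomial.C k := by
    rcases eq_or_ne K' 0 with h | h
    · rw [h, hk, h, Polynomial.coeff_zero, map_zero]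
    · have hne : ((Polynomial.X : Polynomial (Polynomial ℝ)) ^ 2
          + Polynomial.C (2 * P) * Polynomial.X + Polynomial.C (P ^ 2 - Q)) ≠ 0 :=
        hGmonic.ne_zero
      have hdegmul : (K' * ((Polynomial.X : Polynomial (Polynomial ℝ)) ^ 2
          + Polynomial.C (2 * P) * Polynomial.X + Polynomial.C (P ^ 2 - Q))).natDegree
          = K'.natDegree + 2 := by
        rw [Polynomial.natDegree_mul h hne, hGdeg]
      have hle : (Polynomial.C a * Polynomial.X ^ 2 + Polynomial.C b * Polynomial.X
          + Polynomial.C c).natDegree ≤ 2 := natDegree_quadratic_le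
      rw [← hmain] at hdegmul
      have : K'.natDegree = 0 := by omega
      exact (Polynomial.eq_C_of_natDegree_eq_zero this)
  rw [hKC] at hmain
  have hmain' : Polynomial.C a * Polynomial.X ^ 2 + Polynomial.C b * Polynomial.X
        + Polynomial.C c
      = Polynomial.C k * Polynomial.X ^ 2 + Polynomial.C (k * (2 * P)) * Polynomial.X
        + Polynomial.C (k * (P ^ 2 - Q)) := by
    rw [hmain]
    simp only [C_mul]
    ring
  obtain ⟨e2, e1, e0⟩ := quad_coeff_eq hmain'
  rw [ha] at e2; rw [hb] at e1; rw [hc] at e0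
  -- the two polynomial identities
  have id1 : 2 * Q * f = 2 * Q * derivative P + P * derivative Q := by
    linear_combination (P : ℝ[X]) * e1 - e0 - (P ^ 2 + Q) * e2
  have id2 : 2 * Q * g = derivative Q * (P ^ 2 - Q) := by
    linear_combination (-Q : ℝ[X]) * e1 + 2 * P * Q * e2 + P * id1
  -- degree of P
  have hP0 : P ≠ 0 := by
    intro h
    rw [h] at id1
    simp only [derivative_zero, mul_zero, zero_mul, add_zero] at id1
    have : (2 : ℝ[X]) * Q ≠ 0 := mul_ne_zero two_ne_zero hQ
    exact hf0 ((mul_eq_zero.mp id1).resolve_left this)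
  have hkeyd : 2 * Q * f * P = derivative (P ^ 2 * Q) := by
    rw [derivative_mul, derivative_pow]
    simp only [Nat.cast_ofNat, map_ofNat]
    linear_combination (P : ℝ[X]) * id1
  have hlhs_ne : 2 * Q * f * P ≠ 0 :=
    mul_ne_zero (mul_ne_zero (mul_ne_zero two_ne_zero hQ) hf0) hP0
  have hPQ0 : P ^ 2 * Q ≠ 0 := mul_ne_zero (pow_ne_zero 2 hP0) hQ
  have hPQnd : 0 < (P ^ 2 * Q).natDegree := by
    by_contra h
    push_neg at h
    have h' : (P ^ 2 * Q).natDegree = 0 := Nat.le_zero.mp h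
    have := Polynomial.eq_C_of_natDegree_eq_zero h'
    rw [hkeyd, this, derivative_C] at hlhs_ne
    exact hlhs_ne rfl
  have hdd : (derivative (P ^ 2 * Q)).degree = ((P ^ 2 * Q).natDegree - 1 : ℕ) :=
    degree_derivative_eq _ hPQnd
  have hnd1 : (2 * Q * f * P).natDegree = Q.natDegree + m + P.natDegree := by
    rw [Polynomial.natDegree_mul (mul_ne_zero (mul_ne_zero two_ne_zero hQ) hf0) hP0,
      Polynomial.natDegree_mul (mul_ne_zero two_ne_zero hQ) hf0,
      Polynomial.natDegree_mul (two_ne_zero) hQ, hfdeg]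
    simp [Polynomial.natDegree_ofNat]
  have hnd2 : (P ^ 2 * Q).natDegree = 2 * P.natDegree + Q.natDegree := by
    rw [Polynomial.natDegree_mul (pow_ne_zero 2 hP0) hQ, Polynomial.natDegree_pow]
  have hnd3 : (2 * Q * f * P).natDegree = (P ^ 2 * Q).natDegree - 1 := by
    rw [hkeyd]
    exact natDegree_eq_of_degree_eq_some hdd
  have hPdeg : P.natDegree = m + 1 := by omega
  have goal1 : P.degree = ((m + 1 : ℕ) : WithBot ℕ) := by
    rw [Polynomial.degree_eq_natDegree hP0, hPdeg]
  -- degree of P² - Q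
  have hQ'0 : derivative Q ≠ 0 := by
    intro h
    rw [h, zero_mul] at id2
    exact hg0 ((mul_eq_zero.mp id2).resolve_left (mul_ne_zero two_ne_zero hQ))
  have hR0 : P ^ 2 - Q ≠ 0 := by
    intro h
    rw [h, mul_zero] at id2
    exact hg0 ((mul_eq_zero.mp id2).resolve_left (mul_ne_zero two_ne_zero hQ))
  have hQnd : 0 < Q.natDegree := by
    by_contra h
    push_neg at h
    have h' : Q.natDegree = 0 := Nat.le_zero.mp h
    rw [Polynomial.eq_C_of_natDegree_eq_zero h', derivative_C] at hQ'0
    exact hQ'0 rfl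
  have hQ'deg : (derivative Q).natDegree = Q.natDegree - 1 :=
    natDegree_eq_of_degree_eq_some (degree_derivative_eq _ hQnd)
  have hnd4 : (2 * Q * g).natDegree = Q.natDegree + n := by
    rw [Polynomial.natDegree_mul (mul_ne_zero two_ne_zero hQ) hg0,
      Polynomial.natDegree_mul (two_ne_zero) hQ, hgdeg]
    simp [Polynomial.natDegree_ofNat]
  have hnd5 : (2 * Q * g).natDegree = (derivative Q).natDegree + (P ^ 2 - Q).natDegree := by
    rw [id2, Polynomial.natDegree_mul hQ'0 hR0]
  have hRdeg : (P ^ 2 - Q).natDegree = n + 1 := by omega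
  have goal4 : (P ^ 2 - Q).degree = ((n + 1 : ℕ) : WithBot ℕ) := by
    rw [Polynomial.degree_eq_natDegree hR0, hRdeg]
  exact ⟨goal1, id1, id2, goal4⟩
end

section
/- Let P, Q, g be real polynomials with Q ≠ 0 and deg g ≥ 1, satisfying the polynomial identity 2·Q·g = Q'·(P^2 - Q). Then every complex root of Q is a root of P. -/
open Polynomial

/-- If `P, Q, g` are real polynomials with `Q ≠ 0`, `deg g ≥ 1`, satisfying
`2·Q·g = Q'·(P² - Q)`, then every complex root of `Q` is a root of `P`. -/
theorem roots_of_Q_are_roots_of_P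
    (P Q g : ℝ[X]) (hQ : Q ≠ 0) (hg : 1 ≤ g.degree)
    (hid : 2 * Q * g = derivative Q * (P ^ 2 - Q)) :
    ∀ z : ℂ, Polynomial.aeval z Q = 0 → Polynomial.aeval z P = 0 := by
  intro z hz
  by_contra hP
  set f := algebraMap ℝ ℂ
  set QC := Q.map f with hQC
  set PC := P.map f with hPC
  set gC := g.map f with hgC
  have hzQ : QC.eval z = 0 := by
    simpa [hQC, f, eval_map, ← aeval_def] using hz
  have hzP : PC.eval z ≠ 0 := by
    simpa [hPC, f, eval_map, ← aeval_def] using hP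
  have hQC0 : QC ≠ 0 := by
    simpa [hQC, Polynomial.map_eq_zero] using hQ
  have hg0 : g ≠ 0 := by
    intro h; rw [h] at hg; simp at hg
  have hgC0 : gC ≠ 0 := by
    simpa [hgC, Polynomial.map_eq_zero] using hg0
  have hidC : 2 * QC * gC = derivative QC * (PC ^ 2 - QC) := by
    have := congrArg (Polynomial.map f) hid
    simpa [Polynomial.map_mul, Polynomial.map_sub, Polynomial.map_pow,
      derivative_map, hQC, hPC, hgC] using this
  have hL0 : 2 * QC * gC ≠ 0 := by
    refine mul_ne_zero (mul_ne_zero ?_ hQC0) hgC0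
    exact two_ne_zero
  have hR0 : derivative QC * (PC ^ 2 - QC) ≠ 0 := hidC ▸ hL0
  have hm : 0 < QC.rootMultiplicity z := (rootMultiplicity_pos hQC0).mpr hzQ
  have hrmL : QC.rootMultiplicity z ≤ (2 * QC * gC).rootMultiplicity z := by
    rw [rootMultiplicity_mul hL0, rootMultiplicity_mul (mul_ne_zero two_ne_zero hQC0)]
    omega
  have hrmR : (derivative QC * (PC ^ 2 - QC)).rootMultiplicity z
      = QC.rootMultiplicity z - 1 := by
    rw [rootMultiplicity_mul hR0, derivative_rootMultiplicity_of_root hzQ,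
      rootMultiplicity_eq_zero (p := PC ^ 2 - QC) (by simp [IsRoot, hzQ, hzP]), Nat.add_zero]
  rw [hidC, hrmR] at hrmL
  omega
end

section
/- Let P, Q be real polynomials and s₁ < s₂ real numbers such that Q(s₁) = Q(s₂) = 0, Q'(s₁) ≠ 0, Q'(s₂) ≠ 0, and Q(x) > 0 for all x ∈ (s₁, s₂). Then the set C = {(x,y) ∈ ℝ² : s₁ ≤ x ≤ s₂ and (y + P(x))² = Q(x)} is homeomorphic to the unit circle {(u,v) ∈ ℝ² : u² + v² = 1}. -/
open Polynomial

private lemma sq_sign_eq {v w : ℝ} (h : v ^ 2 = w ^ 2) (hs : 0 ≤ v ↔ 0 ≤ w) : v = w := by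
  rcases mul_eq_zero.mp (show (v - w) * (v + w) = 0 by linear_combination h) with h' | h'
  · linarith
  · rcases le_or_gt 0 v with hv | hv
    · have hw := hs.mp hv; linarith
    · have hw : ¬ 0 ≤ w := fun hw => hv.not_ge (hs.mpr hw)
      push_neg at hw; linarith

private noncomputable def hypX (a b u : ℝ) : ℝ := a + (u + 1) * (b - a) / 2

private noncomputable def hypF (φ ψ : ℝ → ℝ) (a b : ℝ) (p : ℝ × ℝ) : ℝ × ℝ :=
  (hypX a b p.1,
    (if 0 ≤ p.2 then Real.sqrt (ψ (hypX a b p.1)) else -Real.sqrt (ψ (hypX a b p.1)))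
      - φ (hypX a b p.1))

private lemma aux_homeo (φ ψ : ℝ → ℝ) (hφ : Continuous φ) (hψ : Continuous ψ)
    (a b : ℝ) (hab : a < b)
    (hψa : ψ a = 0) (hψb : ψ b = 0)
    (hpos : ∀ x ∈ Set.Ioo a b, 0 < ψ x) :
    Nonempty
      (({p : ℝ × ℝ | a ≤ p.1 ∧ p.1 ≤ b ∧ (p.2 + φ p.1) ^ 2 = ψ p.1} : Set (ℝ × ℝ)) ≃ₜ
       ({p : ℝ × ℝ | p.1 ^ 2 + p.2 ^ 2 = 1} : Set (ℝ × ℝ))) := by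
  have hL : (0:ℝ) < b - a := by linarith
  set C : Set (ℝ × ℝ) := {p : ℝ × ℝ | a ≤ p.1 ∧ p.1 ≤ b ∧ (p.2 + φ p.1) ^ 2 = ψ p.1} with hCdef
  set S : Set (ℝ × ℝ) := {p : ℝ × ℝ | p.1 ^ 2 + p.2 ^ 2 = 1} with hSdef
  have hψnn : ∀ t, a ≤ t → t ≤ b → 0 ≤ ψ t := by
    intro t h1 h2
    rcases eq_or_lt_of_le h1 with rfl | h1
    · exact le_of_eq hψa.symm
    rcases eq_or_lt_of_le h2 with rfl | h2
    · exact le_of_eq hψb.symm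
    exact (hpos t ⟨h1, h2⟩).le
  have hψ0 : ∀ t, a ≤ t → t ≤ b → ψ t = 0 → t = a ∨ t = b := by
    intro t h1 h2 h0
    rcases eq_or_lt_of_le h1 with rfl | h1
    · exact Or.inl rfl
    rcases eq_or_lt_of_le h2 with rfl | h2
    · exact Or.inr rfl
    exact absurd h0 (hpos t ⟨h1, h2⟩).ne'
  -- basic facts about hypX
  have hXa : hypX a b (-1) = a := by simp [hypX]
  have hXb : hypX a b 1 = b := by simp [hypX]; ring
  have hXmem : ∀ u : ℝ, -1 ≤ u → u ≤ 1 → a ≤ hypX a b u ∧ hypX a b u ≤ b := by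
    intro u h1 h2
    constructor <;> simp only [hypX] <;> nlinarith
  have hXinj : ∀ u u' : ℝ, hypX a b u = hypX a b u' → u = u' := by
    intro u u' h
    have h' : (u - u') * (b - a) = 0 := by
      simp only [hypX] at h; linear_combination 2 * h
    rcases mul_eq_zero.mp h' with h'' | h''
    · linarith
    · linarith
  have hXeqa : ∀ u : ℝ, hypX a b u = a → u = -1 := by
    intro u h; exact hXinj u (-1) (by rw [h, hXa])
  have hXeqb : ∀ u : ℝ, hypX a b u = b → u = 1 := by
    intro u h; exact hXinj u 1 (by rw [h, hXb])
  -- circle points have coordinates in [-1,1]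
  have hScoord : ∀ p : ℝ × ℝ, p ∈ S → -1 ≤ p.1 ∧ p.1 ≤ 1 := by
    intro p hp
    have hp' : p.1 ^ 2 + p.2 ^ 2 = 1 := hp
    constructor <;> nlinarith [sq_nonneg p.2]
  -- membership of the image
  have hmem : ∀ p : ℝ × ℝ, p ∈ S → hypF φ ψ a b p ∈ C := by
    intro p hp
    obtain ⟨hu1, hu2⟩ := hScoord p hp
    obtain ⟨hxa, hxb⟩ := hXmem p.1 hu1 hu2
    refine ⟨hxa, hxb, ?_⟩
    show ((if 0 ≤ p.2 then Real.sqrt (ψ (hypX a b p.1)) else -Real.sqrt (ψ (hypX a b p.1)))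
      - φ (hypX a b p.1) + φ (hypX a b p.1)) ^ 2 = ψ (hypX a b p.1)
    have hnn := hψnn _ hxa hxb
    split_ifs <;> rw [show ∀ z w : ℝ, (z - w + w) = z from fun z w => by ring] <;>
      simp [Real.sq_sqrt hnn]
  -- the subtype map
  let Fs : S → C := fun p => ⟨hypF φ ψ a b p.1, hmem p.1 p.2⟩
  -- continuity
  have hg : Continuous fun t => Real.sqrt (ψ t) := Real.continuous_sqrt.comp hψ
  have hXc : Continuous (hypX a b) := by unfold hypX; fun_prop
  have hgx : Continuous fun p : ℝ × ℝ => Real.sqrt (ψ (hypX a b p.1)) :=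
    hg.comp (hXc.comp continuous_fst)
  have hZ : ContinuousOn
      (fun p : ℝ × ℝ => if 0 ≤ p.2 then Real.sqrt (ψ (hypX a b p.1))
        else -Real.sqrt (ψ (hypX a b p.1))) S := by
    intro p hp
    rcases lt_trichotomy p.2 0 with hv | hv | hv
    · apply ContinuousAt.continuousWithinAt
      have hev : ∀ᶠ q : ℝ × ℝ in nhds p, q.2 < 0 :=
        (isOpen_lt continuous_snd continuous_const).eventually_mem (by exact hv)
      apply ContinuousAt.congr hgx.neg.continuousAt
      filter_upwards [hev] with q hq
      simp [not_le.mpr hq]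
    · -- p.2 = 0, so p.1 = ±1 and ψ (hypX a b p.1) = 0
      have hp' : p.1 ^ 2 + p.2 ^ 2 = 1 := hp
      have hx1 : p.1 = 1 ∨ p.1 = -1 := by
        have h0 : (p.1 - 1) * (p.1 + 1) = 0 := by nlinarith
        rcases mul_eq_zero.mp h0 with h | h
        · exact Or.inl (by linarith)
        · exact Or.inr (by linarith)
      have hx0 : ψ (hypX a b p.1) = 0 := by
        rcases hx1 with h | h <;> rw [h]
        · rw [hXb]; exact hψb
        · rw [hXa]; exact hψa
      have hval : (if 0 ≤ p.2 then Real.sqrt (ψ (hypX a b p.1))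
          else -Real.sqrt (ψ (hypX a b p.1))) = 0 := by
        rw [if_pos (le_of_eq hv.symm), hx0, Real.sqrt_zero]
      show Filter.Tendsto (fun q : ℝ × ℝ => if 0 ≤ q.2 then Real.sqrt (ψ (hypX a b q.1))
          else -Real.sqrt (ψ (hypX a b q.1))) (nhdsWithin p S)
        (nhds (if 0 ≤ p.2 then Real.sqrt (ψ (hypX a b p.1))
          else -Real.sqrt (ψ (hypX a b p.1))))
      rw [hval]
      have htend : Filter.Tendsto (fun q : ℝ × ℝ => Real.sqrt (ψ (hypX a b q.1)))
          (nhdsWithin p S) (nhds 0) := by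
        have := (hgx.continuousAt (x := p)).continuousWithinAt (s := S)
        rwa [ContinuousWithinAt, hx0, Real.sqrt_zero] at this
      refine tendsto_of_tendsto_of_tendsto_of_le_of_le (by simpa using htend.neg) htend ?_ ?_
      · intro q; dsimp only; split_ifs with h
        · exact (neg_nonpos.mpr (Real.sqrt_nonneg _)).trans (Real.sqrt_nonneg _)
        · exact le_refl _
      · intro q; dsimp only; split_ifs with h
        · exact le_refl _
        · exact (neg_nonpos.mpr (Real.sqrt_nonneg _)).trans (Real.sqrt_nonneg _)
    · apply ContinuousAt.continuousWithinAt
      have hev : ∀ᶠ q : ℝ × ℝ in nhds p, 0 < q.2 :=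
        (isOpen_lt continuous_const continuous_snd).eventually_mem (by exact hv)
      apply ContinuousAt.congr hgx.continuousAt
      filter_upwards [hev] with q hq
      simp [hq.le]
  have hFcont : ContinuousOn (hypF φ ψ a b) S := by
    apply ContinuousOn.prodMk
    · exact (hXc.comp continuous_fst).continuousOn
    · exact hZ.sub ((hφ.comp (hXc.comp continuous_fst)).continuousOn)
  have hFscont : Continuous Fs := by
    apply Continuous.subtype_mk
    exact hFcont.restrict
  -- injectivity
  have hinj : Function.Injective Fs := by
    rintro ⟨p, hp⟩ ⟨q, hq⟩ h
    have h' : hypF φ ψ a b p = hypF φ ψ a b q := congrArg Subtype.val h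
    have h1 : hypX a b p.1 = hypX a b q.1 := congrArg Prod.fst h'
    have hu : p.1 = q.1 := hXinj _ _ h1
    have hp' : p.1 ^ 2 + p.2 ^ 2 = 1 := hp
    have hq' : q.1 ^ 2 + q.2 ^ 2 = 1 := hq
    have hu2 : p.1 ^ 2 = q.1 ^ 2 := by rw [hu]
    have hsq : p.2 ^ 2 = q.2 ^ 2 := by linarith
    have h2 : (if 0 ≤ p.2 then Real.sqrt (ψ (hypX a b p.1)) else -Real.sqrt (ψ (hypX a b p.1)))
        = (if 0 ≤ q.2 then Real.sqrt (ψ (hypX a b q.1)) else -Real.sqrt (ψ (hypX a b q.1))) := by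
      have := congrArg Prod.snd h'
      simp only [hypF] at this
      rw [h1] at this ⊢
      linarith [this]
    have hv : p.2 = q.2 := by
      obtain ⟨hc1, hc2⟩ := hScoord p hp
      obtain ⟨hxa, hxb⟩ := hXmem p.1 hc1 hc2
      have hnn := hψnn _ hxa hxb
      rw [h1] at h2
      have hkey : Real.sqrt (ψ (hypX a b q.1)) = 0 → p.2 = 0 ∧ q.2 = 0 := by
        intro hz
        have hψz : ψ (hypX a b p.1) = 0 := by
          rw [← hu] at hz
          exact (Real.sqrt_eq_zero hnn).mp hz
        have hps : p.1 ^ 2 = 1 := by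
          rcases hψ0 _ hxa hxb hψz with he | he
          · rw [hXeqa _ he]; norm_num
          · rw [hXeqb _ he]; norm_num
        have hp2 : p.2 = 0 := by
          have h0 : p.2 ^ 2 = 0 := by linarith
          exact pow_eq_zero_iff two_ne_zero |>.mp h0
        have hq2 : q.2 = 0 := by
          have h0 : q.2 ^ 2 = 0 := by rw [← hsq]; linarith
          exact pow_eq_zero_iff two_ne_zero |>.mp h0
        exact ⟨hp2, hq2⟩
      rcases le_or_gt 0 p.2 with hsp | hsp <;> rcases le_or_gt 0 q.2 with hsq' | hsq'
      · exact sq_sign_eq hsq (iff_of_true hsp hsq')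
      · rw [if_pos hsp, if_neg (not_le.mpr hsq')] at h2
        have hz : Real.sqrt (ψ (hypX a b q.1)) = 0 := by
          linarith [Real.sqrt_nonneg (ψ (hypX a b q.1))]
        exact absurd (hkey hz).2 hsq'.ne
      · rw [if_neg (not_le.mpr hsp), if_pos hsq'] at h2
        have hz : Real.sqrt (ψ (hypX a b q.1)) = 0 := by
          linarith [Real.sqrt_nonneg (ψ (hypX a b q.1))]
        exact absurd (hkey hz).1 hsp.ne
      · exact sq_sign_eq hsq (iff_of_false (not_le.mpr hsp) (not_le.mpr hsq'))
    apply Subtype.ext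
    exact Prod.ext hu hv
  -- surjectivity
  have hsurj : Function.Surjective Fs := by
    rintro ⟨⟨x₀, y₀⟩, hxa, hxb, heq⟩
    set z₀ : ℝ := y₀ + φ x₀ with hz₀
    set u₀ : ℝ := (2 * x₀ - a - b) / (b - a) with hu₀
    have hXu : hypX a b u₀ = x₀ := by
      simp only [hypX, hu₀]; field_simp; ring
    have hub : -1 ≤ u₀ ∧ u₀ ≤ 1 := by
      constructor
      · rw [hu₀, le_div_iff₀ hL]; linarith
      · rw [hu₀, div_le_one hL]; linarith
    have h1u : 0 ≤ 1 - u₀ ^ 2 := by nlinarith [hub.1, hub.2]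
    have hψx : ψ x₀ = z₀ ^ 2 := by
      simp only [Set.mem_setOf_eq] at heq; linarith [heq]
    rcases le_or_gt 0 z₀ with hz | hz
    · refine ⟨⟨(u₀, Real.sqrt (1 - u₀ ^ 2)), ?_⟩, ?_⟩
      · show u₀ ^ 2 + Real.sqrt (1 - u₀ ^ 2) ^ 2 = 1
        rw [Real.sq_sqrt h1u]; ring
      · apply Subtype.ext
        show hypF φ ψ a b (u₀, Real.sqrt (1 - u₀ ^ 2)) = (x₀, y₀)
        simp only [hypF]
        refine Prod.ext ?_ ?_
        · exact hXu
        · show (if 0 ≤ Real.sqrt (1 - u₀ ^ 2) then Real.sqrt (ψ (hypX a b u₀))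
            else -Real.sqrt (ψ (hypX a b u₀))) - φ (hypX a b u₀) = y₀
          rw [if_pos (Real.sqrt_nonneg _), hXu, hψx, Real.sqrt_sq hz]
          ring
    · -- z₀ < 0 : then ψ x₀ > 0, so x₀ is interior and sqrt (1 - u₀²) > 0
      have hψpos : 0 < ψ x₀ := by rw [hψx]; nlinarith
      have hxa' : a < x₀ := by
        rcases eq_or_lt_of_le hxa with rfl | h
        · rw [hψa] at hψpos; exact absurd hψpos (lt_irrefl 0)
        · exact h
      have hxb' : x₀ < b := by
        rcases eq_or_lt_of_le hxb with rfl | h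
        · rw [hψb] at hψpos; exact absurd hψpos (lt_irrefl 0)
        · exact h
      have hu1 : -1 < u₀ := by rw [hu₀, lt_div_iff₀ hL]; linarith
      have hu2 : u₀ < 1 := by rw [hu₀, div_lt_one hL]; linarith
      have h1u' : 0 < 1 - u₀ ^ 2 := by nlinarith
      have hsqpos : 0 < Real.sqrt (1 - u₀ ^ 2) := Real.sqrt_pos.mpr h1u'
      refine ⟨⟨(u₀, -Real.sqrt (1 - u₀ ^ 2)), ?_⟩, ?_⟩
      · show u₀ ^ 2 + (-Real.sqrt (1 - u₀ ^ 2)) ^ 2 = 1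
        rw [neg_pow, Real.sq_sqrt h1u]; ring
      · apply Subtype.ext
        show hypF φ ψ a b (u₀, -Real.sqrt (1 - u₀ ^ 2)) = (x₀, y₀)
        simp only [hypF]
        refine Prod.ext ?_ ?_
        · exact hXu
        · show (if 0 ≤ -Real.sqrt (1 - u₀ ^ 2) then Real.sqrt (ψ (hypX a b u₀))
            else -Real.sqrt (ψ (hypX a b u₀))) - φ (hypX a b u₀) = y₀
          rw [if_neg (by linarith), hXu, hψx, Real.sqrt_sq_eq_abs, abs_of_neg hz]
          ring
  -- compactness of the circle
  have hSclosed : IsClosed S := isClosed_eq (by fun_prop) continuous_const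
  have hScompact : IsCompact S := by
    apply IsCompact.of_isClosed_subset (isCompact_Icc (a := ((-1 : ℝ), (-1 : ℝ))) (b := (1, 1)))
      hSclosed
    intro p hp
    have hp' : p.1 ^ 2 + p.2 ^ 2 = 1 := hp
    constructor
    · constructor <;> simp <;> nlinarith [sq_nonneg p.1, sq_nonneg p.2]
    · constructor <;> simp <;> nlinarith [sq_nonneg p.1, sq_nonneg p.2]
  haveI : CompactSpace S := isCompact_iff_compactSpace.mp hScompact
  let E : S ≃ C := Equiv.ofBijective Fs ⟨hinj, hsurj⟩
  have hEcont : Continuous E := hFscont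
  exact ⟨(hEcont.homeoOfEquivCompactToT2).symm⟩

/-- If `s₁ < s₂` are simple roots of `Q` and `Q > 0` on `(s₁, s₂)`, then the part of the
hyperelliptic curve `(y + P(x))² = Q(x)` in the strip `s₁ ≤ x ≤ s₂` is a closed curve,
i.e. it is homeomorphic to the unit circle. -/
theorem hyperelliptic_curve_contains_closed_curve
    (P Q : ℝ[X]) (s₁ s₂ : ℝ) (hlt : s₁ < s₂)
    (h1 : Q.eval s₁ = 0) (h1' : (derivative Q).eval s₁ ≠ 0)
    (h2 : Q.eval s₂ = 0) (h2' : (derivative Q).eval s₂ ≠ 0)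
    (hpos : ∀ x ∈ Set.Ioo s₁ s₂, 0 < Q.eval x) :
    Nonempty
      (({p : ℝ × ℝ | s₁ ≤ p.1 ∧ p.1 ≤ s₂ ∧ (p.2 + P.eval p.1) ^ 2 = Q.eval p.1} : Set (ℝ × ℝ)) ≃ₜ
       ({p : ℝ × ℝ | p.1 ^ 2 + p.2 ^ 2 = 1} : Set (ℝ × ℝ))) := by
  exact aux_homeo (fun t => P.eval t) (fun t => Q.eval t) P.continuous Q.continuous
    s₁ s₂ hlt h1 h2 hpos
end

section
/- Let P, Q, g be real polynomials satisfying 2·Q·g = Q'·(P² - Q). Assume all complex roots of Q are real, s₁ < s₂ are simple roots of Q with Q(x) > 0 for all x ∈ (s₁, s₂), and P(x)² - Q(x) < 0 for all x ∈ (s₁, s₂). Then there is exactly one point α ∈ (s₁, s₂) with g(α) = 0, this α is the unique root of Q' in (s₁, s₂), and moreover g'(α) > 0. -/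
open Polynomial

lemma keyW : ∀ (n : ℕ) (Q : ℝ[X]), Q ≠ 0 → Q.natDegree = n →
    Multiset.card Q.roots = n → ∀ x : ℝ, Q.eval x ≠ 0 →
    (derivative (derivative Q) * Q - derivative Q ^ 2).eval x ≤ 0 ∧
    (0 < n → (derivative (derivative Q) * Q - derivative Q ^ 2).eval x < 0) := by
  intro n
  induction n with
  | zero =>
    intro Q hQ hdeg _ x _
    obtain ⟨c, rfl⟩ := Polynomial.natDegree_eq_zero.mp hdeg
    simp
  | succ n ih =>
    intro Q hQ hdeg hcard x hx
    have hmem : ∃ r, r ∈ Q.roots := by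
      rcases Multiset.card_pos_iff_exists_mem.mp (by rw [hcard]; omega) with ⟨r, hr⟩
      exact ⟨r, hr⟩
    obtain ⟨r, hr⟩ := hmem
    have hroot : Q.IsRoot r := isRoot_of_mem_roots hr
    obtain ⟨R, hQR⟩ := (dvd_iff_isRoot).mpr hroot
    have hR0 : R ≠ 0 := by rintro rfl; simp at hQR; exact hQ hQR
    have hXr : (X - C r) ≠ (0 : ℝ[X]) := X_sub_C_ne_zero r
    have hdegR : R.natDegree = n := by
      have := natDegree_mul hXr hR0
      rw [← hQR, natDegree_X_sub_C] at this
      omega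
    have hcardR : Multiset.card R.roots = n := by
      have : Q.roots = (X - C r).roots + R.roots := by
        rw [hQR, roots_mul (hQR ▸ hQ)]
      rw [this, roots_X_sub_C] at hcard
      simp at hcard
      omega
    have hxR : R.eval x ≠ 0 := fun h => hx (by simp [hQR, h])
    have hxr : x - r ≠ 0 := by
      intro h; apply hx; rw [hQR]; simp [sub_eq_zero.mp h]
    have hIH := (ih R hR0 hdegR hcardR x hxR).1
    have hexp : (derivative (derivative Q) * Q - derivative Q ^ 2).eval x =
        (x - r) ^ 2 * ((derivative (derivative R) * R - derivative R ^ 2).eval x)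
          - (R.eval x) ^ 2 := by
      simp only [hQR, derivative_mul, derivative_add, derivative_sub, derivative_X, derivative_C,
        eval_mul, eval_add, eval_sub, eval_X, eval_C, eval_pow, eval_one, sub_zero, one_mul]
      ring
    constructor
    · rw [hexp]; nlinarith [sq_nonneg (x - r), sq_nonneg (R.eval x), pow_ne_zero 2 hxR]
    · intro _
      rw [hexp]
      have : (0:ℝ) < R.eval x ^ 2 := by positivity
      nlinarith [sq_nonneg (x - r)]

lemma realRooted_card (Q : ℝ[X]) (hQ : Q ≠ 0)
    (hreal : ∀ z : ℂ, Polynomial.aeval z Q = 0 → z.im = 0) :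
    Multiset.card Q.roots = Q.natDegree := by
  classical
  set Qc := Q.map (algebraMap ℝ ℂ) with hQc
  have hinj : Function.Injective (algebraMap ℝ ℂ) := (algebraMap ℝ ℂ).injective
  have hsplit : Multiset.card Qc.roots = Qc.natDegree :=
    splits_iff_card_roots.mp (IsAlgClosed.splits Qc)
  have hdeg : Qc.natDegree = Q.natDegree := natDegree_map_eq_of_injective hinj Q
  have hroots : Qc.roots = Q.roots.map (algebraMap ℝ ℂ) := by
    ext z
    by_cases him : z.im = 0
    · have hz : z = algebraMap ℝ ℂ z.re := by
        apply Complex.ext <;> simp [him]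
      rw [hz, Multiset.count_map_eq_count' _ _ hinj, count_roots, count_roots,
        ← eq_rootMultiplicity_map hinj]
    · rw [Multiset.count_eq_zero.mpr, Multiset.count_eq_zero.mpr]
      · intro hmem
        obtain ⟨r, _, hr⟩ := Multiset.mem_map.mp hmem
        exact him (by rw [← hr]; simp)
      · intro hmem
        apply him
        apply hreal
        have := isRoot_of_mem_roots hmem
        rwa [IsRoot, eval_map, ← aeval_def] at this
  have := hsplit
  rw [hroots, Multiset.card_map, hdeg] at this
  exact this

/-- Under the hyperelliptic-curve relation `2·Q·g = Q'·(P² - Q)`, with all complex roots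
of `Q` real, `s₁ < s₂` simple roots of `Q`, `Q > 0` and `P² - Q < 0` on `(s₁, s₂)`, there
is exactly one `α ∈ (s₁, s₂)` with `g(α) = 0`; this `α` is also the unique root of `Q'`
in `(s₁, s₂)`, and `g'(α) > 0`. -/
theorem unique_singularity_is_focus_or_node
    (P Q g : ℝ[X])
    (hid : 2 * Q * g = derivative Q * (P ^ 2 - Q))
    (hreal : ∀ z : ℂ, Polynomial.aeval z Q = 0 → z.im = 0)
    (s₁ s₂ : ℝ) (hlt : s₁ < s₂)
    (h1 : Q.eval s₁ = 0) (h1' : (derivative Q).eval s₁ ≠ 0)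
    (h2 : Q.eval s₂ = 0) (h2' : (derivative Q).eval s₂ ≠ 0)
    (hQpos : ∀ x ∈ Set.Ioo s₁ s₂, 0 < Q.eval x)
    (hPQ : ∀ x ∈ Set.Ioo s₁ s₂, (P.eval x) ^ 2 - Q.eval x < 0) :
    ∃ α ∈ Set.Ioo s₁ s₂, g.eval α = 0 ∧
      (∀ β ∈ Set.Ioo s₁ s₂, g.eval β = 0 → β = α) ∧
      (derivative Q).eval α = 0 ∧
      (∀ β ∈ Set.Ioo s₁ s₂, (derivative Q).eval β = 0 → β = α) ∧
      0 < (derivative g).eval α := by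
  have hQ0 : Q ≠ 0 := by
    intro h
    have := hQpos ((s₁+s₂)/2) ⟨by linarith, by linarith⟩
    rw [h] at this; simp at this
  have hcard := realRooted_card Q hQ0 hreal
  have hdpos : 0 < Q.natDegree := by
    rcases Nat.eq_zero_or_pos Q.natDegree with h | h
    · obtain ⟨c, rfl⟩ := natDegree_eq_zero.mp h
      simp only [eval_C] at h1
      exact absurd (by simp [h1]) hQ0
    · exact h
  have hW : ∀ x ∈ Set.Ioo s₁ s₂,
      (derivative (derivative Q)).eval x * Q.eval x - ((derivative Q).eval x) ^ 2 < 0 := by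
    intro x hx
    have := (keyW Q.natDegree Q hQ0 rfl hcard x (ne_of_gt (hQpos x hx))).2 hdpos
    simpa using this
  set h : ℝ → ℝ := fun x => (derivative Q).eval x / Q.eval x with hh
  have hanti : StrictAntiOn h (Set.Ioo s₁ s₂) := by
    apply strictAntiOn_of_deriv_neg (convex_Ioo _ _)
    · exact ContinuousOn.div ((derivative Q).continuous_aeval.continuousOn)
        (Q.continuous_aeval.continuousOn) (fun x hx => ne_of_gt (hQpos x hx))
    · intro x hx
      rw [interior_Ioo] at hx
      have hne : Q.eval x ≠ 0 := ne_of_gt (hQpos x hx)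
      have hd : HasDerivAt h
          (((derivative (derivative Q)).eval x * Q.eval x -
            (derivative Q).eval x * (derivative Q).eval x) / (Q.eval x)^2) x :=
        (Polynomial.hasDerivAt (derivative Q) x).div (Polynomial.hasDerivAt Q x) hne
      rw [hd.deriv]
      apply div_neg_of_neg_of_pos
      · have := hW x hx; nlinarith [this]
      · positivity
  obtain ⟨α, hαmem, hα⟩ := exists_deriv_eq_zero (f := fun x => Q.eval x) hlt
    (Q.continuous.continuousOn) (by simpa using h1.trans h2.symm)
  rw [Polynomial.deriv] at hα
  have hQα : 0 < Q.eval α := hQpos α hαmem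
  have hPQα : (P.eval α) ^ 2 - Q.eval α < 0 := hPQ α hαmem
  have huniqQ' : ∀ β ∈ Set.Ioo s₁ s₂, (derivative Q).eval β = 0 → β = α := by
    intro β hβ hβ0
    apply hanti.injOn hβ hαmem
    simp only [hh, hβ0, hα, zero_div]
  have hev : ∀ x : ℝ, 2 * Q.eval x * g.eval x
      = (derivative Q).eval x * ((P.eval x)^2 - Q.eval x) := by
    intro x
    have := congrArg (eval x) hid
    simpa using this
  have hgα : g.eval α = 0 := by
    have := hev α
    rw [hα] at this
    simp at this
    rcases this with h | h
    · exact absurd h (ne_of_gt hQα)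
    · exact h
  have huniqg : ∀ β ∈ Set.Ioo s₁ s₂, g.eval β = 0 → β = α := by
    intro β hβ hgβ
    apply huniqQ' β hβ
    have := hev β
    rw [hgβ, mul_zero] at this
    rcases mul_eq_zero.mp this.symm with h | h
    · exact h
    · exact absurd h (ne_of_lt (hPQ β hβ))
  have hQ''α : (derivative (derivative Q)).eval α * Q.eval α < 0 := by
    have := hW α hαmem
    rw [hα] at this
    simpa using this
  have hE := congrArg (fun p => eval α (derivative p)) hid
  simp only [derivative_mul, eval_add, eval_mul, eval_sub, eval_pow,
    derivative_sub, derivative_pow, eval_ofNat, hα, hgα, mul_zero, zero_mul,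
    add_zero, zero_add] at hE
  refine ⟨α, hαmem, hgα, huniqg, hα, huniqQ', ?_⟩
  have hA : eval α (derivative (derivative Q)) < 0 := by
    by_contra hc; push_neg at hc
    nlinarith
  have hAB : 0 < eval α (derivative (derivative Q)) * (eval α P ^ 2 - eval α Q) :=
    mul_pos_of_neg_of_neg hA hPQα
  by_contra hc; push_neg at hc
  nlinarith
end

section
/- Let P, Q, f, g be real polynomials with deg f = m, deg g = n, deg P = m + 1, satisfying 2·Q·f = 2·Q·P' + P·Q' and 2·Q·g = Q'·(P² - Q), such that all complex roots of Q are real. Let a < b be simple roots of Q with Q > 0 on (a, b) and P² - Q < 0 on (a, b), and suppose f(α) ≠ 0 for every α ∈ (a, b) with Q'(α) = 0. For s ∈ ℝ set P̃_s(x) = P(x)·(x - s) and Q̃_s(x) = Q(x)·(x - s)². Then for all sufficiently large s: there exist real polynomials f̃_s of degree m + 1 and g̃_s of degree n + 2 with 2·Q̃_s·f̃_s = 2·Q̃_s·P̃_s' + P̃_s·Q̃_s' and 2·Q̃_s·g̃_s = Q̃_s'·(P̃_s² - Q̃_s); all complex roots of Q̃_s are real; a and b are simple roots of Q̃_s with Q̃_s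 > 0 on (a, b) and P̃_s² - Q̃_s < 0 on (a, b); and f̃_s(α̃) ≠ 0 for every α̃ ∈ (a, b) with Q̃_s'(α̃) = 0. -/
/-!
The lifted polynomials `f̃ = f·(x - s) + 2P` and `g̃ = (g·(x - s) + P² - Q)·(x - s)` satisfy both
identities for every `s`, and the root and sign conditions on `[a, b]` survive as soon as `s > b`.
The degrees are forced by the identities alone: `P·(2QP' + PQ') = (P²Q)'` gives
`deg f = deg P - 1`, and `2Qg = Q'(P² - Q)` gives `deg g = deg (P² - Q) - 1`.
The only obstruction is an interior critical point `α` of `Q̃` with `f̃(α) = 0`. Eliminating `s`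
from these two equations makes `α` a root of `P Q' - f Q`, which is nonzero by Rolle's theorem and
the hypothesis on `f`, and then `s = α + 2Q(α)/Q'(α)`: only finitely many `s` are bad.
-/

open Polynomial Filter Set

namespace Polynomial

section Degree

variable {R : Type*} [CommRing R] [IsDomain R] [CharZero R]

theorem degree_eq_of_lienard_f_identity {P Q f : R[X]} {k : ℕ} (hQ : Q ≠ 0)
    (hP : P.natDegree = k + 1) (h : 2 * Q * f = 2 * Q * derivative P + P * derivative Q) :
    f.degree = k := by
  have hP0 : P ≠ 0 := by rintro rfl; simp at hP
  -- `P` is an integrating factor: `P * (2 Q P' + P Q') = (P² Q)'`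
  have key : P * (2 * Q * f) = derivative (P ^ 2 * Q) := by
    rw [h, derivative_mul, derivative_sq, C_ofNat]; ring
  have hlhs : degree (P * (2 * Q * f)) = ↑(k + 1 + Q.natDegree) + f.degree := by
    rw [degree_mul, degree_mul, degree_mul, degree_eq_natDegree hP0, degree_eq_natDegree hQ, hP,
      ← C_ofNat, degree_C two_ne_zero, zero_add, ← add_assoc]
    rfl
  have hrhs : degree (derivative (P ^ 2 * Q)) = ↑(k + 1 + Q.natDegree) + k := by
    rw [degree_derivative (by simp [natDegree_mul, hP0, hQ, hP]),
      natDegree_mul (pow_ne_zero 2 hP0) hQ, natDegree_pow, hP]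
    norm_cast
    omega
  exact (WithBot.add_left_inj WithBot.coe_ne_bot).1 (hlhs.symm.trans (key ▸ hrhs))

theorem degree_add_one_eq_of_lienard_g_identity {Q g W : R[X]} (hQ : Q.natDegree ≠ 0)
    (h : 2 * Q * g = derivative Q * W) : g.degree + 1 = W.degree := by
  obtain ⟨d, hd⟩ := Nat.exists_eq_add_one_of_ne_zero hQ
  have hQ0 : Q ≠ 0 := by rintro rfl; simp at hQ
  have hdeg := congrArg degree h
  rw [degree_mul, degree_mul, degree_mul, degree_derivative hQ, degree_eq_natDegree hQ0,
    ← C_ofNat, degree_C two_ne_zero, zero_add, hd, Nat.add_sub_cancel, Nat.cast_add,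
    add_assoc] at hdeg
  rw [add_comm]
  exact (WithBot.add_left_inj WithBot.coe_ne_bot).1 hdeg

end Degree

section Lift

variable {R : Type*} [CommRing R]

theorem derivative_mul_X_sub_C_sq (Q : R[X]) (s : R) :
    derivative (Q * (X - C s) ^ 2) = (X - C s) * (derivative Q * (X - C s) + 2 * Q) := by
  rw [derivative_mul, derivative_X_sub_C_sq, C_ofNat]; ring

theorem lienard_f_identity_lift {P Q f : R[X]} (s : R)
    (h : 2 * Q * f = 2 * Q * derivative P + P * derivative Q) :
    2 * (Q * (X - C s) ^ 2) * (f * (X - C s) + 2 * P) =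
      2 * (Q * (X - C s) ^ 2) * derivative (P * (X - C s)) +
        P * (X - C s) * derivative (Q * (X - C s) ^ 2) := by
  rw [derivative_mul_X_sub_C_sq, derivative_mul, derivative_X_sub_C]
  linear_combination (X - C s) ^ 3 * h

theorem lienard_g_identity_lift {P Q g : R[X]} (s : R)
    (h : 2 * Q * g = derivative Q * (P ^ 2 - Q)) :
    2 * (Q * (X - C s) ^ 2) * ((g * (X - C s) + (P ^ 2 - Q)) * (X - C s)) =
      derivative (Q * (X - C s) ^ 2) * ((P * (X - C s)) ^ 2 - Q * (X - C s) ^ 2) := by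
  rw [derivative_mul_X_sub_C_sq]
  linear_combination (X - C s) ^ 4 * h

variable [IsDomain R]

theorem eval_derivative_mul_X_sub_C_sq_ne_zero {Q : R[X]} {r s : R} (hr : Q.eval r = 0)
    (hr' : (derivative Q).eval r ≠ 0) (hrs : r ≠ s) :
    (derivative (Q * (X - C s) ^ 2)).eval r ≠ 0 := by
  rw [derivative_mul_X_sub_C_sq]
  simp [hr, hr', sub_ne_zero.2 hrs]

variable [CharZero R]

theorem degree_lienard_f_lift {P Q f : R[X]} {m : ℕ} (s : R) (hQ : Q ≠ 0)
    (hP : P.natDegree = m + 1) (h : 2 * Q * f = 2 * Q * derivative P + P * derivative Q) :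
    (f * (X - C s) + 2 * P).degree = ↑(m + 1) := by
  have hP0 : P ≠ 0 := by rintro rfl; simp at hP
  refine degree_eq_of_lienard_f_identity (mul_ne_zero hQ (pow_ne_zero 2 (X_sub_C_ne_zero s)))
    ?_ (lienard_f_identity_lift s h)
  rw [natDegree_mul hP0 (X_sub_C_ne_zero s), natDegree_X_sub_C, hP]

theorem degree_lienard_g_lift {P Q g : R[X]} {n : ℕ} (s : R) (hQ : Q.natDegree ≠ 0)
    (hg : g.degree = n) (h : 2 * Q * g = derivative Q * (P ^ 2 - Q)) :
    ((g * (X - C s) + (P ^ 2 - Q)) * (X - C s)).degree = ↑(n + 2) := by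
  have hQ0 : Q ≠ 0 := by rintro rfl; simp at hQ
  have hW := degree_add_one_eq_of_lienard_g_identity hQ h
  have hQs : (Q * (X - C s) ^ 2).natDegree ≠ 0 := by
    rw [natDegree_mul hQ0 (pow_ne_zero 2 (X_sub_C_ne_zero s))]
    omega
  have hlift := degree_add_one_eq_of_lienard_g_identity hQs (lienard_g_identity_lift s h)
  have hWs :
      ((P * (X - C s)) ^ 2 - Q * (X - C s) ^ 2).degree = ((n + 2 : ℕ) : WithBot ℕ) + 1 := by
    rw [show (P * (X - C s)) ^ 2 - Q * (X - C s) ^ 2 = (X - C s) ^ 2 * (P ^ 2 - Q) by ring,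
      degree_mul, ← hW, hg, degree_pow, degree_X_sub_C, nsmul_one]
    push_cast
    ring
  exact (WithBot.add_right_inj WithBot.one_ne_bot).1 (hlift.trans hWs)

end Lift

theorem isRoot_and_eq_of_lift_critical {K : Type*} [Field K] [CharZero K] {P Q f : K[X]}
    {α s : K} (hαs : α ≠ s) (hQα : Q.eval α ≠ 0)
    (hcrit : (derivative (Q * (X - C s) ^ 2)).eval α = 0)
    (hf : (f * (X - C s) + 2 * P).eval α = 0) :
    (P * derivative Q - f * Q).IsRoot α ∧ s = α + 2 * Q.eval α / (derivative Q).eval α := by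
  rw [derivative_mul_X_sub_C_sq] at hcrit
  simp only [eval_mul, eval_add, eval_sub, eval_X, eval_C, eval_ofNat] at hcrit hf
  have h1 := (mul_eq_zero.1 hcrit).resolve_left (sub_ne_zero.2 hαs)
  have hQ'α : (derivative Q).eval α ≠ 0 := by
    intro h
    rw [h, zero_mul, zero_add, mul_eq_zero] at h1
    exact hQα (h1.resolve_left two_ne_zero)
  refine ⟨?_, ?_⟩
  · simp only [IsRoot, eval_sub, eval_mul]
    linear_combination ((derivative Q).eval α * hf - f.eval α * h1) / 2
  · field_simp
    linear_combination -h1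

theorem mul_derivative_sub_mul_ne_zero {P Q f : ℝ[X]} {a b : ℝ} (hab : a < b)
    (ha : Q.eval a = 0) (hb : Q.eval b = 0) (hQpos : ∀ x ∈ Ioo a b, 0 < Q.eval x)
    (hcrit : ∀ α ∈ Ioo a b, (derivative Q).eval α = 0 → f.eval α ≠ 0) :
    P * derivative Q - f * Q ≠ 0 := by
  obtain ⟨c, hc, hc'⟩ := exists_deriv_eq_zero hab Q.continuousOn (ha.trans hb.symm)
  rw [Polynomial.deriv] at hc'
  intro h
  have hRc := congrArg (eval c) h
  simp only [eval_sub, eval_mul, hc', mul_zero, zero_sub, eval_zero, neg_eq_zero] at hRc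
  exact mul_ne_zero (hcrit c hc hc') (hQpos c hc).ne' hRc

theorem eventually_lift_critical_ne_zero {P Q f : ℝ[X]} {a b : ℝ}
    (hR : P * derivative Q - f * Q ≠ 0) (hQpos : ∀ x ∈ Ioo a b, 0 < Q.eval x) :
    ∀ᶠ s in atTop, ∀ α ∈ Ioo a b, (derivative (Q * (X - C s) ^ 2)).eval α = 0 →
      (f * (X - C s) + 2 * P).eval α ≠ 0 := by
  obtain ⟨M, hM⟩ := ((P * derivative Q - f * Q).roots.toFinset.image
    fun α => α + 2 * Q.eval α / (derivative Q).eval α).bddAbove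
  filter_upwards [eventually_gt_atTop b, eventually_gt_atTop M] with s hbs hMs α hα hcrit hf
  obtain ⟨hroot, rfl⟩ :=
    isRoot_and_eq_of_lift_critical (hα.2.trans hbs).ne (hQpos α hα).ne' hcrit hf
  refine hMs.not_ge (hM (Finset.mem_coe.2 (Finset.mem_image_of_mem _ ?_)))
  exact Multiset.mem_toFinset.2 ((mem_roots hR).2 hroot)

theorem im_eq_zero_of_aeval_mul_X_sub_C_sq {Q : ℝ[X]}
    (hQ : ∀ z : ℂ, aeval z Q = 0 → z.im = 0)
    {s : ℝ} {z : ℂ} (hz : aeval z (Q * (X - C s) ^ 2) = 0) : z.im = 0 := by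
  rw [map_mul, map_pow, map_sub, aeval_X, aeval_C, mul_eq_zero] at hz
  rcases hz with hz | hz
  · exact hQ z hz
  · rw [sub_eq_zero.1 (pow_eq_zero_iff two_ne_zero |>.1 hz)]
    simp

end Polynomial

theorem lift_to_higher_type_general
    (m n : ℕ) (P Q f g : ℝ[X])
    (hg : g.degree = (n : ℕ))
    (hP : P.degree = ((m + 1 : ℕ) : WithBot ℕ))
    (hid1 : 2 * Q * f = 2 * Q * derivative P + P * derivative Q)
    (hid2 : 2 * Q * g = derivative Q * (P ^ 2 - Q))
    (hreal : ∀ z : ℂ, Polynomial.aeval z Q = 0 → z.im = 0)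
    (a b : ℝ) (hab : a < b)
    (ha : Q.eval a = 0) (ha' : (derivative Q).eval a ≠ 0)
    (hb : Q.eval b = 0) (hb' : (derivative Q).eval b ≠ 0)
    (hQpos : ∀ x ∈ Set.Ioo a b, 0 < Q.eval x)
    (hPQ : ∀ x ∈ Set.Ioo a b, (P.eval x) ^ 2 - Q.eval x < 0)
    (hcrit : ∀ α ∈ Set.Ioo a b, (derivative Q).eval α = 0 → f.eval α ≠ 0) :
    ∃ s₀ : ℝ, ∀ s : ℝ, s₀ ≤ s →
      ∀ Pt Qt : ℝ[X], Pt = P * (X - C s) → Qt = Q * (X - C s) ^ 2 →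
      ∃ ft gt : ℝ[X],
        ft.degree = ((m + 1 : ℕ) : WithBot ℕ) ∧
        gt.degree = ((n + 2 : ℕ) : WithBot ℕ) ∧
        2 * Qt * ft = 2 * Qt * derivative Pt + Pt * derivative Qt ∧
        2 * Qt * gt = derivative Qt * (Pt ^ 2 - Qt) ∧
        (∀ z : ℂ, Polynomial.aeval z Qt = 0 → z.im = 0) ∧
        Qt.eval a = 0 ∧ (derivative Qt).eval a ≠ 0 ∧
        Qt.eval b = 0 ∧ (derivative Qt).eval b ≠ 0 ∧
        (∀ x ∈ Set.Ioo a b, 0 < Qt.eval x) ∧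
        (∀ x ∈ Set.Ioo a b, (Pt.eval x) ^ 2 - Qt.eval x < 0) ∧
        (∀ α ∈ Set.Ioo a b, (derivative Qt).eval α = 0 → ft.eval α ≠ 0) := by
  have hQ : Q.natDegree ≠ 0 := fun h => ha' (by rw [derivative_of_natDegree_zero h, eval_zero])
  have hQ0 : Q ≠ 0 := by rintro rfl; simp at hQ
  obtain ⟨s₀, hs₀⟩ := eventually_atTop.1 ((eventually_gt_atTop b).and
    (eventually_lift_critical_ne_zero (mul_derivative_sub_mul_ne_zero hab ha hb hQpos hcrit) hQpos))
  refine ⟨s₀, fun s hs Pt Qt hPt hQt => ?_⟩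
  subst hPt hQt
  obtain ⟨hbs, hcrit_lift⟩ := hs₀ s hs
  have hsq : ∀ x ∈ Ioo a b, 0 < (x - s) ^ 2 := fun x hx =>
    sq_pos_of_neg (sub_neg.2 (hx.2.trans hbs))
  refine ⟨f * (X - C s) + 2 * P, (g * (X - C s) + (P ^ 2 - Q)) * (X - C s),
    degree_lienard_f_lift s hQ0 (natDegree_eq_of_degree_eq_some hP) hid1,
    degree_lienard_g_lift s hQ hg hid2, lienard_f_identity_lift s hid1,
    lienard_g_identity_lift s hid2, fun z => im_eq_zero_of_aeval_mul_X_sub_C_sq hreal,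
    by simp [ha], eval_derivative_mul_X_sub_C_sq_ne_zero ha ha' (hab.trans hbs).ne,
    by simp [hb], eval_derivative_mul_X_sub_C_sq_ne_zero hb hb' hbs.ne,
    fun x hx => ?_, fun x hx => ?_, hcrit_lift⟩
  · simpa using mul_pos (hQpos x hx) (hsq x hx)
  · simpa [mul_pow, ← sub_mul] using mul_neg_of_neg_of_pos (hPQ x hx) (hsq x hx)

/-- Lemma 9 (key step): from a hyperelliptic-limit-cycle configuration for a Liénard
system of type `(m,n)` over an interval `[a,b]`, the substitution
`P̃ₛ = P·(x-s)`, `Q̃ₛ = Q·(x-s)²` yields, for all sufficiently large `s`, a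
configuration of type `(m+1, n+2)` over the same interval. -/
theorem lift_to_higher_type
    (m n : ℕ) (P Q f g : ℝ[X])
    (hf : f.degree = (m : ℕ)) (hg : g.degree = (n : ℕ))
    (hP : P.degree = ((m + 1 : ℕ) : WithBot ℕ))
    (hid1 : 2 * Q * f = 2 * Q * derivative P + P * derivative Q)
    (hid2 : 2 * Q * g = derivative Q * (P ^ 2 - Q))
    (hreal : ∀ z : ℂ, Polynomial.aeval z Q = 0 → z.im = 0)
    (a b : ℝ) (hab : a < b)
    (ha : Q.eval a = 0) (ha' : (derivative Q).eval a ≠ 0)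
    (hb : Q.eval b = 0) (hb' : (derivative Q).eval b ≠ 0)
    (hQpos : ∀ x ∈ Set.Ioo a b, 0 < Q.eval x)
    (hPQ : ∀ x ∈ Set.Ioo a b, (P.eval x) ^ 2 - Q.eval x < 0)
    (hcrit : ∀ α ∈ Set.Ioo a b, (derivative Q).eval α = 0 → f.eval α ≠ 0) :
    ∃ s₀ : ℝ, ∀ s : ℝ, s₀ ≤ s →
      ∀ Pt Qt : ℝ[X], Pt = P * (X - C s) → Qt = Q * (X - C s) ^ 2 →
      ∃ ft gt : ℝ[X],
        ft.degree = ((m + 1 : ℕ) : WithBot ℕ) ∧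
        gt.degree = ((n + 2 : ℕ) : WithBot ℕ) ∧
        2 * Qt * ft = 2 * Qt * derivative Pt + Pt * derivative Qt ∧
        2 * Qt * gt = derivative Qt * (Pt ^ 2 - Qt) ∧
        (∀ z : ℂ, Polynomial.aeval z Qt = 0 → z.im = 0) ∧
        Qt.eval a = 0 ∧ (derivative Qt).eval a ≠ 0 ∧
        Qt.eval b = 0 ∧ (derivative Qt).eval b ≠ 0 ∧
        (∀ x ∈ Set.Ioo a b, 0 < Qt.eval x) ∧
        (∀ x ∈ Set.Ioo a b, (Pt.eval x) ^ 2 - Qt.eval x < 0) ∧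
        (∀ α ∈ Set.Ioo a b, (derivative Qt).eval α = 0 → ft.eval α ≠ 0) :=
  lift_to_higher_type_general m n P Q f g hg hP hid1 hid2 hreal a b hab ha ha' hb hb' hQpos hPQ
    hcrit
end

section
/- Fix integers m and n with n ≠ 2m + 1, and let f, g be real polynomials with deg f = m and deg g = n ≥ 1. If (P₁, Q₁) and (P₂, Q₂) are two pairs of real polynomials with Q₁ ≠ 0, Q₂ ≠ 0, deg P₁ = deg P₂ = m + 1, each satisfying 2·Q·f = 2·Q·P' + P·Q' and 2·Q·g = Q'·(P² - Q), then P₁ = P₂ and Q₁ = Q₂. In other words, a Liénard system of type (m, n) with n ≠ 2m + 1 has at most one hyperelliptic invariant curve (y + P(x))² - Q(x) = 0. -/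
open Polynomial

lemma deriv_nd {Q : ℝ[X]} (hd : Q.natDegree ≠ 0) :
    (derivative Q).natDegree = Q.natDegree - 1 ∧
    (derivative Q).coeff (Q.natDegree - 1) = Q.leadingCoeff * Q.natDegree := by
  have hQ0 : Q ≠ 0 := fun h => hd (by simp [h])
  have hc : (derivative Q).coeff (Q.natDegree - 1) = Q.leadingCoeff * Q.natDegree := by
    rw [coeff_derivative, Nat.sub_add_cancel (Nat.one_le_iff_ne_zero.2 hd)]
    rw [leadingCoeff]
    congr 1
    have : (1:ℝ) ≤ Q.natDegree := by exact_mod_cast Nat.one_le_iff_ne_zero.2 hd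
    push_cast [Nat.cast_sub (Nat.one_le_iff_ne_zero.2 hd)]
    ring
  have hne : (derivative Q).coeff (Q.natDegree - 1) ≠ 0 := by
    rw [hc]
    exact mul_ne_zero (leadingCoeff_ne_zero.2 hQ0) (Nat.cast_ne_zero.2 hd)
  have hle : (derivative Q).natDegree ≤ Q.natDegree - 1 :=
    Nat.le_sub_one_of_lt (natDegree_derivative_lt hd)
  exact ⟨le_antisymm hle (le_natDegree_of_ne_zero hne), hc⟩

lemma lienard_aux (m n : ℕ) (hn : n ≠ 2*m+1) (f g P Q : ℝ[X])
    (hQ0 : Q ≠ 0) (hfd : f.natDegree = m) (hf0 : f ≠ 0)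
    (hgd : g.natDegree = n) (hg0 : g ≠ 0)
    (hPd : P.natDegree = m+1) (hP0 : P ≠ 0)
    (h1 : 2*Q*f = 2*Q*derivative P + P*derivative Q)
    (h2 : 2*Q*g = derivative Q * (P^2 - Q)) :
    derivative Q = 2*(P*(f - derivative P) - g) ∧
    (f - derivative P) * (P^2 - Q) = P*g ∧
    f - derivative P ≠ 0 ∧
    (f - derivative P).natDegree = m ∧
    Q.natDegree = (if 2*m+1 < n then n+1 else 2*m+2) ∧
    2*f.leadingCoeff = P.leadingCoeff * ((Q.natDegree : ℝ) + 2*m+2) ∧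
    2*(f - derivative P).leadingCoeff = P.leadingCoeff * (Q.natDegree : ℝ) := by
  set h : ℝ[X] := f - derivative P with hh
  -- (a) derivative Q = 2*(P*h - g)
  have ha : derivative Q = 2*(P*h - g) := by
    have key : Q * (derivative Q - 2*(P*h - g)) = 0 := by
      rw [hh]; linear_combination h2 - P * h1
    rcases mul_eq_zero.1 key with h' | h'
    · exact absurd h' hQ0
    · exact sub_eq_zero.1 h'
  have hPQ' : P * derivative Q = 2*Q*h := by rw [hh]; linear_combination -h1
  have hstar : h * (P^2 - Q) = P * g := by
    apply mul_left_cancel₀ (two_ne_zero' ℝ[X])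
    linear_combination hPQ' - P * ha
  have hne : h ≠ 0 := by
    intro h0
    rw [h0, zero_mul] at hstar
    exact mul_ne_zero hP0 hg0 hstar.symm
  have hQ'ne : derivative Q ≠ 0 := by
    intro h0
    rw [h0, mul_zero] at hPQ'
    exact mul_ne_zero (mul_ne_zero (two_ne_zero' ℝ[X]) hQ0) hne hPQ'.symm
  have hdne : Q.natDegree ≠ 0 := by
    intro h0
    exact hQ'ne (by rw [eq_C_of_natDegree_eq_zero h0]; simp)
  obtain ⟨hdQ', hcQ'⟩ := deriv_nd hdne
  have hd1 : 1 ≤ Q.natDegree := Nat.one_le_iff_ne_zero.2 hdne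
  -- natDegree h = m
  have hnd2Q : (2*Q : ℝ[X]) ≠ 0 := mul_ne_zero (two_ne_zero' ℝ[X]) hQ0
  have hndL : (P * derivative Q).natDegree = (m+1) + (Q.natDegree - 1) := by
    rw [natDegree_mul hP0 hQ'ne, hPd, hdQ']
  have hndR : (2*Q*h).natDegree = Q.natDegree + h.natDegree := by
    rw [natDegree_mul hnd2Q hne, natDegree_mul (two_ne_zero' ℝ[X]) hQ0]
    simp [natDegree_ofNat]
  have hhm : h.natDegree = m := by
    have := hPQ' ▸ hndL
    rw [hndR] at this
    omega
  -- leading coefficients from hPQ'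
  have hlcQ' : (derivative Q).leadingCoeff = Q.leadingCoeff * Q.natDegree := by
    rw [leadingCoeff, hdQ', hcQ']
  have hlcP : P.leadingCoeff = P.coeff (m+1) := by rw [leadingCoeff, hPd]
  have hlc1 : P.leadingCoeff * (Q.leadingCoeff * Q.natDegree) = 2 * Q.leadingCoeff * h.leadingCoeff := by
    have := congrArg leadingCoeff hPQ'
    rw [leadingCoeff_mul, hlcQ', leadingCoeff_mul, leadingCoeff_mul] at this
    rw [show ((2:ℝ[X])).leadingCoeff = 2 from by rw [show (2:ℝ[X]) = C 2 from (map_ofNat C 2).symm, leadingCoeff_C]] at this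
    exact this
  have hq0 : Q.leadingCoeff ≠ 0 := leadingCoeff_ne_zero.2 hQ0
  have hlch : 2 * h.leadingCoeff = P.leadingCoeff * (Q.natDegree : ℝ) := by
    have := mul_left_cancel₀ hq0 (show Q.leadingCoeff * (2 * h.leadingCoeff) = Q.leadingCoeff * (P.leadingCoeff * (Q.natDegree : ℝ)) by linear_combination -hlc1)
    exact this
  -- coeff m of h
  have hcoefh : h.leadingCoeff = f.leadingCoeff - P.leadingCoeff * (m+1) := by
    rw [leadingCoeff, hhm, hh, coeff_sub, coeff_derivative, leadingCoeff, hfd, hlcP]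
  have hlcf : 2*f.leadingCoeff = P.leadingCoeff * ((Q.natDegree : ℝ) + 2*m+2) := by
    linear_combination -2*hcoefh + hlch
  -- degree of Q
  have hPQne : P^2 - Q ≠ 0 := by
    intro h0
    rw [h0, mul_zero] at hstar
    exact mul_ne_zero hP0 hg0 hstar.symm
  have hnsub : (P^2 - Q).natDegree = n + 1 := by
    have := congrArg natDegree hstar
    rw [natDegree_mul hne hPQne, natDegree_mul hP0 hg0, hhm, hPd, hgd] at this
    omega
  have hndP2 : (P^2 : ℝ[X]).natDegree = 2*m+2 := by
    rw [natDegree_pow, hPd]; ring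
  have hdval : Q.natDegree = (if 2*m+1 < n then n+1 else 2*m+2) := by
    rcases lt_trichotomy Q.natDegree (2*m+2) with hlt | heq | hgt
    · exfalso
      have : (P^2 - Q).natDegree = 2*m+2 := by
        rw [natDegree_sub_eq_left_of_natDegree_lt (by omega : Q.natDegree < (P^2:ℝ[X]).natDegree), hndP2]
      omega
    · have hle : (P^2 - Q).natDegree ≤ 2*m+2 :=
        le_trans (natDegree_sub_le _ _) (by rw [hndP2, heq]; omega)
      rw [if_neg (by omega)]
      exact heq
    · have : (P^2 - Q).natDegree = Q.natDegree := by
        rw [natDegree_sub_eq_right_of_natDegree_lt (by omega : (P^2:ℝ[X]).natDegree < Q.natDegree)]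
      rw [if_pos (by omega)]
      omega
  refine ⟨ha, hstar, hne, hhm, hdval, hlcf, by rw [hlch]⟩

/-- Lemma 10 (uniqueness of the hyperelliptic curve): a Liénard system of type `(m,n)`
with `n ≠ 2m + 1` has at most one hyperelliptic invariant curve
`(y + P(x))² - Q(x) = 0`. -/
theorem uniqueness_of_hyperelliptic_curve
    (m n : ℕ) (hn : n ≠ 2 * m + 1) (hn1 : 1 ≤ n)
    (f g : ℝ[X]) (hf : f.degree = (m : ℕ)) (hg : g.degree = (n : ℕ))
    (P₁ Q₁ P₂ Q₂ : ℝ[X]) (hQ₁ : Q₁ ≠ 0) (hQ₂ : Q₂ ≠ 0)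
    (hP₁ : P₁.degree = ((m + 1 : ℕ) : WithBot ℕ))
    (hP₂ : P₂.degree = ((m + 1 : ℕ) : WithBot ℕ))
    (h11 : 2 * Q₁ * f = 2 * Q₁ * derivative P₁ + P₁ * derivative Q₁)
    (h12 : 2 * Q₁ * g = derivative Q₁ * (P₁ ^ 2 - Q₁))
    (h21 : 2 * Q₂ * f = 2 * Q₂ * derivative P₂ + P₂ * derivative Q₂)
    (h22 : 2 * Q₂ * g = derivative Q₂ * (P₂ ^ 2 - Q₂)) :
    P₁ = P₂ ∧ Q₁ = Q₂ := by
  have hfd : f.natDegree = m := natDegree_eq_of_degree_eq_some hf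
  have hgd : g.natDegree = n := natDegree_eq_of_degree_eq_some hg
  have hP1d : P₁.natDegree = m + 1 := natDegree_eq_of_degree_eq_some hP₁
  have hP2d : P₂.natDegree = m + 1 := natDegree_eq_of_degree_eq_some hP₂
  have hf0 : f ≠ 0 := fun h => by simp [h] at hf
  have hg0 : g ≠ 0 := fun h => by simp [h] at hg
  have hP10 : P₁ ≠ 0 := fun h => by rw [h, natDegree_zero] at hP1d; omega
  have hP20 : P₂ ≠ 0 := fun h => by rw [h, natDegree_zero] at hP2d; omega
  obtain ⟨ha1, hstar1, hne1, hhm1, hdval1, hlcf1, hlch1⟩ :=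
    lienard_aux m n hn f g P₁ Q₁ hQ₁ hfd hf0 hgd hg0 hP1d hP10 h11 h12
  obtain ⟨ha2, hstar2, hne2, hhm2, hdval2, hlcf2, hlch2⟩ :=
    lienard_aux m n hn f g P₂ Q₂ hQ₂ hfd hf0 hgd hg0 hP2d hP20 h21 h22
  have hdd : Q₂.natDegree = Q₁.natDegree := by rw [hdval1, hdval2]
  have hd1 : 1 ≤ Q₁.natDegree := by rw [hdval1]; split <;> omega
  have hp0 : P₁.leadingCoeff ≠ 0 := leadingCoeff_ne_zero.2 hP10
  have hdpos : (0:ℝ) < (Q₁.natDegree : ℝ) + 2*m+2 := by positivity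
  have hpp : P₂.leadingCoeff = P₁.leadingCoeff := by
    apply mul_right_cancel₀ (ne_of_gt hdpos)
    rw [← hlcf1, ← hdd, ← hlcf2]
  have hP12 : P₁ = P₂ := by
    by_contra hWne
    have hW0 : P₁ - P₂ ≠ 0 := sub_ne_zero.2 hWne
    set W := P₁ - P₂ with hWdef
    obtain ⟨w, hwdef⟩ : ∃ k, W.natDegree = k := ⟨_, rfl⟩
    have hlcW : W.leadingCoeff ≠ 0 := leadingCoeff_ne_zero.2 hW0
    have hwle : w ≤ m := by
      have hWle : W.natDegree ≤ m + 1 :=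
        le_trans (natDegree_sub_le _ _) (by rw [hP1d, hP2d]; omega)
      rcases Nat.lt_or_ge w (m+1) with h' | h'
      · omega
      · exfalso
        have hweq : w = m + 1 := le_antisymm (hwdef ▸ hWle) h'
        have : W.coeff (m+1) = 0 := by
          have e1 : P₁.coeff (m+1) = P₁.leadingCoeff := by rw [leadingCoeff, hP1d]
          have e2 : P₂.coeff (m+1) = P₂.leadingCoeff := by rw [leadingCoeff, hP2d]
          rw [hWdef, coeff_sub, e1, e2, hpp, sub_self]
        exact hlcW (by rwa [leadingCoeff, hwdef, hweq])
    have hcoeff2 : ∀ (X : ℝ[X]) (k : ℕ), ((2:ℝ[X])*X).coeff k = 2 * X.coeff k := fun X k => by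
      rw [show (2:ℝ[X]) = C 2 from (map_ofNat C 2).symm, coeff_C_mul]
    have ha0 : f.leadingCoeff ≠ 0 := leadingCoeff_ne_zero.2 hf0
    have hb0 : g.leadingCoeff ≠ 0 := leadingCoeff_ne_zero.2 hg0
    -- derivative of P₁ has natDegree m and top coeff p*(m+1)
    have hcP1' : (derivative P₁).coeff m = P₁.leadingCoeff * (m+1) := by
      rw [coeff_derivative, leadingCoeff, hP1d]
    have hndP1' : (derivative P₁).natDegree = m := by
      refine le_antisymm ?_ (le_natDegree_of_ne_zero ?_)
      · have := natDegree_derivative_le P₁; rw [hP1d] at this; omega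
      · rw [hcP1']
        exact mul_ne_zero hp0 (by positivity)
    -- facts about f*W
    have hfW : (f*W).natDegree = m + w ∧ (f*W).coeff (m+w) = f.leadingCoeff * W.leadingCoeff := by
      constructor
      · rw [natDegree_mul hf0 hW0, hfd, hwdef]
      · have := coeff_mul_degree_add_degree f W
        rwa [hfd, hwdef] at this
    -- facts about P₁ * derivative W
    have hPW' : (P₁ * derivative W).natDegree ≤ m + w ∧
        (P₁ * derivative W).coeff (m+w) = P₁.leadingCoeff * (W.leadingCoeff * w) := by
      rcases Nat.eq_zero_or_pos w with hw0 | hwpos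
      · have hdw : derivative W = 0 := by
          have hWc : W = C (W.coeff 0) := eq_C_of_natDegree_eq_zero (by rw [hwdef, hw0])
          rw [hWc, derivative_C]
        rw [hdw, mul_zero]
        simp [hw0]
      · obtain ⟨hnd', hc'⟩ := deriv_nd (by omega : W.natDegree ≠ 0)
        rw [hwdef] at hnd' hc'
        constructor
        · exact le_trans natDegree_mul_le (by rw [hP1d, hnd']; omega)
        · have e := coeff_mul_degree_add_degree P₁ (derivative W)
          rw [hP1d, hnd'] at e
          have elc : (derivative W).leadingCoeff = W.leadingCoeff * w := by
            rw [leadingCoeff, hnd', hc']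
          calc (P₁ * derivative W).coeff (m+w)
              = (P₁ * derivative W).coeff (m+1+(w-1)) := by congr 1; omega
            _ = P₁.leadingCoeff * (derivative W).leadingCoeff := e
            _ = P₁.leadingCoeff * (W.leadingCoeff * w) := by rw [elc]
    -- facts about W * derivative P₁
    have hWP' : (W * derivative P₁).natDegree ≤ m + w ∧
        (W * derivative P₁).coeff (m+w) = W.leadingCoeff * (P₁.leadingCoeff * (m+1)) := by
      have hP1'0 : derivative P₁ ≠ 0 := fun h => by
        rw [h, coeff_zero] at hcP1'
        exact mul_ne_zero hp0 (by positivity : ((m:ℝ)+1) ≠ 0) hcP1'.symm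
      constructor
      · exact le_trans natDegree_mul_le (by rw [hndP1']; omega)
      · have e := coeff_mul_degree_add_degree W (derivative P₁)
        rw [hwdef, hndP1'] at e
        have elc : (derivative P₁).leadingCoeff = P₁.leadingCoeff * (m+1) := by
          rw [leadingCoeff, hndP1', hcP1']
        calc (W * derivative P₁).coeff (m+w)
            = (W * derivative P₁).coeff (w+m) := by congr 1; omega
          _ = W.leadingCoeff * (derivative P₁).leadingCoeff := e
          _ = W.leadingCoeff * (P₁.leadingCoeff * (m+1)) := by rw [elc]
    -- G
    set G := f*W + P₁*(derivative W) - W*(derivative P₁) with hGdef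
    have hGle : G.natDegree ≤ m + w := by
      rw [hGdef]
      refine le_trans (natDegree_sub_le _ _) (max_le (le_trans (natDegree_add_le _ _) (max_le ?_ hPW'.1)) hWP'.1)
      rw [hfW.1]
    have hGc : G.coeff (m+w) = W.leadingCoeff *
        (f.leadingCoeff + P₁.leadingCoeff*w - P₁.leadingCoeff*(m+1)) := by
      rw [hGdef, coeff_sub, coeff_add, hfW.2, hPW'.2, hWP'.2]; ring
    have hGval : f.leadingCoeff + P₁.leadingCoeff*w - P₁.leadingCoeff*(m+1)
        = P₁.leadingCoeff * ((Q₁.natDegree:ℝ) + 2*w) / 2 := by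
      linear_combination hlcf1/2
    have hGc0 : G.coeff (m+w) ≠ 0 := by
      rw [hGc, hGval]
      have h1 : (0:ℝ) < (Q₁.natDegree:ℝ) + 2*w := by
        have : (1:ℝ) ≤ (Q₁.natDegree:ℝ) := by exact_mod_cast hd1
        positivity
      exact mul_ne_zero hlcW (by positivity)
    have hGnd : G.natDegree = m + w := le_antisymm hGle (le_natDegree_of_ne_zero hGc0)
    have hG0 : G ≠ 0 := fun h => hGc0 (by rw [h, coeff_zero])
    -- D
    set D := Q₁ - Q₂ + P₁*P₁ - P₂*P₂ with hDdef
    have hD' : derivative D = 2*(f*W) := by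
      rw [hDdef]
      simp only [derivative_sub, derivative_add, derivative_mul]
      rw [ha1, ha2, hWdef]
      ring
    have hfW0 : f*W ≠ 0 := mul_ne_zero hf0 hW0
    have h2fW0 : (2:ℝ[X])*(f*W) ≠ 0 := mul_ne_zero (two_ne_zero' ℝ[X]) hfW0
    have hDd0 : D.natDegree ≠ 0 := by
      intro h0
      have : derivative D = 0 := by rw [eq_C_of_natDegree_eq_zero h0, derivative_C]
      rw [hD'] at this
      exact h2fW0 this
    have hD0 : D ≠ 0 := fun h => hDd0 (by rw [h, natDegree_zero])
    obtain ⟨hDnd', hDc'⟩ := deriv_nd hDd0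
    have hnd2fW : ((2:ℝ[X])*(f*W)).natDegree = m + w := by
      rw [natDegree_mul (two_ne_zero' ℝ[X]) hfW0, hfW.1, natDegree_ofNat, zero_add]
    have hDnd : D.natDegree = m + w + 1 := by
      rw [hD', hnd2fW] at hDnd'
      omega
    have hlcD : D.leadingCoeff * ((m:ℝ) + w + 1) = 2 * f.leadingCoeff * W.leadingCoeff := by
      rw [hD'] at hDc'
      rw [hDnd] at hDc'
      have : ((2:ℝ[X])*(f*W)).coeff (m+w+1-1) = 2 * (f.leadingCoeff * W.leadingCoeff) := by
        rw [show m+w+1-1 = m+w from rfl, hcoeff2, hfW.2]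
      rw [this] at hDc'
      push_cast at hDc' ⊢
      linarith [hDc']
    -- the key identity
    have hI : ((f - derivative P₁)*(f - derivative P₂))*D =
        2*(((f - derivative P₁)*(f - derivative P₂))*((P₁+P₂)*W)) - g*G := by
      rw [hDdef, hGdef, hWdef]
      simp only [derivative_sub]
      linear_combination (f - derivative P₁)*hstar2 - (f - derivative P₂)*hstar1
    have hhh0 : (f - derivative P₁)*(f - derivative P₂) ≠ 0 := mul_ne_zero hne1 hne2
    have hhhnd : ((f - derivative P₁)*(f - derivative P₂)).natDegree = m + m := by
      rw [natDegree_mul hne1 hne2, hhm1, hhm2]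
    rcases lt_or_gt_of_ne hn with hlt | hgt
    · -- n < 2m+1, here Q₁.natDegree = 2m+2
      have hd2 : Q₁.natDegree = 2*m+2 := by rw [hdval1]; rw [if_neg (by omega)]
      have hco := congrArg (fun q : ℝ[X] => q.coeff (m + m + (m + w + 1))) hI
      simp only [coeff_sub] at hco
      -- LHS coefficient
      have hL : (((f - derivative P₁)*(f - derivative P₂))*D).coeff (m + m + (m + w + 1)) =
          (f - derivative P₁).leadingCoeff * (f - derivative P₂).leadingCoeff * D.leadingCoeff := by
        have := coeff_mul_degree_add_degree ((f - derivative P₁)*(f - derivative P₂)) D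
        rw [hhhnd, hDnd, leadingCoeff_mul] at this
        exact this
      -- (P₁+P₂) facts
      have hPPc : (P₁+P₂).coeff (m+1) = 2 * P₁.leadingCoeff := by
        have e1 : P₁.coeff (m+1) = P₁.leadingCoeff := by rw [leadingCoeff, hP1d]
        have e2 : P₂.coeff (m+1) = P₂.leadingCoeff := by rw [leadingCoeff, hP2d]
        rw [coeff_add, e1, e2, hpp]; ring
      have hPP0 : P₁ + P₂ ≠ 0 := fun h => by
        rw [h, coeff_zero] at hPPc
        exact mul_ne_zero (two_ne_zero' ℝ) hp0 hPPc.symm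
      have hPPnd : (P₁+P₂).natDegree = m+1 := by
        refine le_antisymm (le_trans (natDegree_add_le _ _) (by rw [hP1d, hP2d]; omega))
          (le_natDegree_of_ne_zero ?_)
        rw [hPPc]
        exact mul_ne_zero (two_ne_zero' ℝ) hp0
      have hPPlc : (P₁+P₂).leadingCoeff = 2 * P₁.leadingCoeff := by
        rw [leadingCoeff, hPPnd, hPPc]
      have hA : (2*(((f - derivative P₁)*(f - derivative P₂))*((P₁+P₂)*W))).coeff (m + m + (m + w + 1)) =
          2 * ((f - derivative P₁).leadingCoeff * (f - derivative P₂).leadingCoeff *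
            (2 * P₁.leadingCoeff * W.leadingCoeff)) := by
        rw [hcoeff2]
        have hnd : ((P₁+P₂)*W).natDegree = m + 1 + w := by
          rw [natDegree_mul hPP0 hW0, hPPnd, hwdef]
        have := coeff_mul_degree_add_degree ((f - derivative P₁)*(f - derivative P₂)) ((P₁+P₂)*W)
        rw [hhhnd, hnd, leadingCoeff_mul, leadingCoeff_mul, hPPlc] at this
        rw [show m + m + (m + w + 1) = m + m + (m + 1 + w) from by omega, this]
        try ring
      have hB : (g*G).coeff (m + m + (m + w + 1)) = 0 := by
        apply coeff_eq_zero_of_natDegree_lt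
        calc (g*G).natDegree ≤ g.natDegree + G.natDegree := natDegree_mul_le
        _ = n + (m+w) := by rw [hgd, hGnd]
        _ < m + m + (m + w + 1) := by omega
      rw [hL, hA, hB, sub_zero] at hco
      -- deduce w = 0
      have hL1 : (f - derivative P₁).leadingCoeff ≠ 0 := leadingCoeff_ne_zero.2 hne1
      have hL2 : (f - derivative P₂).leadingCoeff ≠ 0 := leadingCoeff_ne_zero.2 hne2
      have hlcD4 : D.leadingCoeff = 4 * P₁.leadingCoeff * W.leadingCoeff := by
        have := mul_left_cancel₀ (mul_ne_zero hL1 hL2)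
          (show ((f - derivative P₁).leadingCoeff * (f - derivative P₂).leadingCoeff) * D.leadingCoeff =
            ((f - derivative P₁).leadingCoeff * (f - derivative P₂).leadingCoeff) *
              (4 * P₁.leadingCoeff * W.leadingCoeff) from by linear_combination hco)
        exact this
      have hw0 : w = 0 := by
        have hkey : P₁.leadingCoeff * W.leadingCoeff * (4*(w:ℝ)) = 0 := by
          have h2a : 2 * f.leadingCoeff = P₁.leadingCoeff * (4*(m:ℝ)+4) := by
            rw [hlcf1, hd2]; push_cast; ring
          rw [hlcD4] at hlcD
          linear_combination hlcD + W.leadingCoeff * h2a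
        have := mul_ne_zero hp0 hlcW
        have h4w : (4:ℝ)*(w:ℝ) = 0 := by
          rcases mul_eq_zero.1 hkey with h' | h'
          · exact absurd h' this
          · exact h'
        have : (w:ℝ) = 0 := by linarith
        exact_mod_cast this
      -- now W is a nonzero constant
      have hWC : W = C (W.coeff 0) := eq_C_of_natDegree_eq_zero (by rw [hwdef, hw0])
      have hc0 : W.coeff 0 ≠ 0 := fun h => hW0 (by rw [hWC, h, map_zero])
      have hW'0 : derivative W = 0 := by rw [hWC, derivative_C]
      have hP' : derivative P₂ = derivative P₁ := by
        rw [hWdef, derivative_sub] at hW'0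
        have := sub_eq_zero.1 hW'0
        exact this.symm
      rw [hP'] at hstar2 ha2 hne2
      -- divisibility : (f - P₁') ∣ g
      have d1 : (f - derivative P₁) ∣ P₁*g := ⟨P₁^2 - Q₁, hstar1.symm⟩
      have d2 : (f - derivative P₁) ∣ P₂*g := ⟨P₂^2 - Q₂, hstar2.symm⟩
      have d3 : (f - derivative P₁) ∣ C (W.coeff 0) * g := by
        have := dvd_sub d1 d2
        rwa [show P₁*g - P₂*g = C (W.coeff 0) * g from by rw [← hWC, hWdef]; ring] at this
      have d4 : (f - derivative P₁) ∣ g := by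
        have hu : IsUnit (C (W.coeff 0)) := isUnit_C.2 hc0.isUnit
        exact hu.dvd_mul_left.mp d3
      obtain ⟨s, hgs⟩ := d4
      have hs0 : s ≠ 0 := fun h => hg0 (by rw [hgs, h, mul_zero])
      have hQ1e : Q₁ = P₁*P₁ - P₁*s := by
        have e : (f - derivative P₁)*(P₁^2 - Q₁) = (f - derivative P₁)*(P₁*s) := by
          rw [hstar1, hgs]; ring
        have := mul_left_cancel₀ hne1 e
        linear_combination -this
      have hQ2e : Q₂ = P₂*P₂ - P₂*s := by
        have e : (f - derivative P₁)*(P₂^2 - Q₂) = (f - derivative P₁)*(P₂*s) := by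
          rw [hstar2, hgs]; ring
        have := mul_left_cancel₀ hne1 e
        linear_combination -this
      have e1 : 2*(P₁*(f - derivative P₁) - g) =
          derivative P₁*P₁ + P₁*derivative P₁ - (derivative P₁*s + P₁*derivative s) := by
        have := congrArg derivative hQ1e
        rw [ha1] at this
        simp only [derivative_sub, derivative_mul] at this
        exact this
      have e2 : 2*(P₂*(f - derivative P₁) - g) =
          derivative P₁*P₂ + P₂*derivative P₁ - (derivative P₁*s + P₂*derivative s) := by
        have := congrArg derivative hQ2e
        rw [ha2] at this
        simp only [derivative_sub, derivative_mul, hP'] at this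
        exact this
      have hP2e : P₂ = P₁ - C (W.coeff 0) := by
        rw [← hWC, hWdef]; ring
      have hsd : derivative s = 4*derivative P₁ - 2*f := by
        have key : C (W.coeff 0) * (2*f + derivative s - 4*derivative P₁) = 0 := by
          rw [hP2e] at e2
          linear_combination e1 - e2
        rcases mul_eq_zero.1 key with h' | h'
        · exact absurd h' (fun hh' => hc0 (by rwa [Polynomial.C_eq_zero] at hh'))
        · linear_combination h'
      have hfin : s * (3*derivative P₁ - 2*f) = 0 := by
        linear_combination e1 + 2*hgs - P₁*hsd
      have h3 : 3*derivative P₁ = 2*f := by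
        rcases mul_eq_zero.1 hfin with h' | h'
        · exact absurd h' hs0
        · linear_combination h'
      have hcm := congrArg (fun q : ℝ[X] => q.coeff m) h3
      have hc3 : ((3:ℝ[X])*derivative P₁).coeff m = 3 * (P₁.leadingCoeff * (m+1)) := by
        rw [show (3:ℝ[X]) = C 3 from (map_ofNat C 3).symm, coeff_C_mul, hcP1']
      have hc2 : ((2:ℝ[X])*f).coeff m = 2 * f.leadingCoeff := by
        rw [hcoeff2, leadingCoeff, hfd]
      rw [hc3, hc2] at hcm
      have h2a : 2 * f.leadingCoeff = P₁.leadingCoeff * (4*(m:ℝ)+4) := by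
        rw [hlcf1, hd2]; push_cast; ring
      have : P₁.leadingCoeff * ((m:ℝ)+1) = 0 := by linarith [hcm, h2a]
      rcases mul_eq_zero.1 this with h' | h'
      · exact hp0 h'
      · have : ((m:ℝ)+1) ≠ 0 := by positivity
        exact this h'
    · -- n > 2m+1
      have hco := congrArg (fun q : ℝ[X] => q.coeff (n + (m + w))) hI
      simp only [coeff_sub] at hco
      have hL : (((f - derivative P₁)*(f - derivative P₂))*D).coeff (n + (m + w)) = 0 := by
        apply coeff_eq_zero_of_natDegree_lt
        calc (((f - derivative P₁)*(f - derivative P₂))*D).natDegree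
            ≤ ((f - derivative P₁)*(f - derivative P₂)).natDegree + D.natDegree := natDegree_mul_le
        _ = m + m + (m + w + 1) := by rw [hhhnd, hDnd]
        _ < n + (m + w) := by omega
      have hA : (2*(((f - derivative P₁)*(f - derivative P₂))*((P₁+P₂)*W))).coeff (n + (m + w)) = 0 := by
        apply coeff_eq_zero_of_natDegree_lt
        calc (2*(((f - derivative P₁)*(f - derivative P₂))*((P₁+P₂)*W))).natDegree
            ≤ (2:ℝ[X]).natDegree + (((f - derivative P₁)*(f - derivative P₂))*((P₁+P₂)*W)).natDegree :=
              natDegree_mul_le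
        _ ≤ 0 + (((f - derivative P₁)*(f - derivative P₂)).natDegree + ((P₁+P₂)*W).natDegree) := by
              rw [natDegree_ofNat]
              exact add_le_add le_rfl natDegree_mul_le
        _ ≤ 0 + ((m + m) + ((m+1) + w)) := by
              refine add_le_add le_rfl (add_le_add (le_of_eq hhhnd) (le_trans natDegree_mul_le ?_))
              refine add_le_add (le_trans (natDegree_add_le _ _) ?_) (le_of_eq hwdef)
              rw [hP1d, hP2d]; omega
        _ < n + (m + w) := by omega
      have hB : (g*G).coeff (n + (m + w)) = g.leadingCoeff * G.leadingCoeff := by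
        have := coeff_mul_degree_add_degree g G
        rwa [hgd, hGnd] at this
      rw [hL, hA, hB] at hco
      have hGlc0 : G.leadingCoeff ≠ 0 := leadingCoeff_ne_zero.2 hG0
      exact mul_ne_zero hb0 hGlc0 (by linarith [hco])
  refine ⟨hP12, ?_⟩
  have h2' : (f - derivative P₁) * (P₁^2 - Q₂) = P₁ * g := by rw [hP12]; exact hstar2
  have := mul_left_cancel₀ hne1 (hstar1.trans h2'.symm)
  linear_combination -this
end

section
/- Let P and Q be monic complex polynomials with deg P = m + 1 and deg Q = 2m + 2, and suppose deg(P² - Q) ≤ n + 1 for some integer n ≤ 2m - 1. Then for every j with 1 ≤ j ≤ 2m - n, the j-th power sum of the roots of P² counted with multiplicity equals the j-th power sum of the roots of Q counted with multiplicity; that is, 2·∑_{r : P(r)=0} mult_P(r)·r^j = ∑_{r : Q(r)=0} mult_Q(r)·r^j. -/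
/-!
`P²` and `Q` are monic of degree `2m + 2` and agree in every coefficient above degree `n + 1`,
so by Vieta's formulas the elementary symmetric functions of their roots agree up to order
`2m - n`. Newton's identities express the first `2m - n` power sums through these, and the
roots of `P²` are those of `P`, each taken twice.
-/

open Polynomial Finset

namespace Multiset

variable {R : Type*} [CommRing R]

theorem sum_map_pow_eq_mul_esymm_sub_sum (s : Multiset R) {k : ℕ} (hk : 0 < k) :
    (s.map (· ^ k)).sum = (-1) ^ (k + 1) * k * s.esymm k -
      ∑ a ∈ Finset.HasAntidiagonal.antidiagonal k with a.1 ∈ Set.Ioo 0 k,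
        (-1) ^ a.1 * s.esymm a.1 * (s.map (· ^ a.2)).sum := by
  obtain ⟨l, rfl⟩ : ∃ l : List R, (l : Multiset R) = s := Quotient.exists_rep s
  have hl : (univ.val.map l.get : Multiset R) = l := by
    rw [Fin.univ_val_map, List.ofFn_get]
  have hpsum (i : ℕ) : MvPolynomial.aeval l.get (MvPolynomial.psum (Fin l.length) R i)
      = ((l : Multiset R).map (· ^ i)).sum := by
    rw [MvPolynomial.psum, map_sum]
    simp only [map_pow, MvPolynomial.aeval_X, Finset.sum_eq_multiset_sum, ← hl, map_map,
      Function.comp_def]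
  have hesymm (i : ℕ) : MvPolynomial.aeval l.get (MvPolynomial.esymm (Fin l.length) R i)
      = (l : Multiset R).esymm i := by
    rw [MvPolynomial.aeval_esymm_eq_multiset_esymm, hl]
  have newton := congrArg (MvPolynomial.aeval l.get)
    (MvPolynomial.psum_eq_mul_esymm_sub_sum (Fin l.length) R k hk)
  simpa only [map_sub, map_mul, map_sum, map_pow, map_neg, map_one, map_natCast, hpsum,
    hesymm] using newton

theorem sum_map_pow_eq_of_esymm_eq {s t : Multiset R} {N : ℕ}
    (h : ∀ k ≤ N, s.esymm k = t.esymm k) {j : ℕ} (hj : 0 < j) (hjN : j ≤ N) :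
    (s.map (· ^ j)).sum = (t.map (· ^ j)).sum := by
  induction j using Nat.strong_induction_on with
  | _ j ih =>
    rw [sum_map_pow_eq_mul_esymm_sub_sum s hj, sum_map_pow_eq_mul_esymm_sub_sum t hj,
      h j hjN]
    congr 1
    refine Finset.sum_congr rfl fun a ha ↦ ?_
    simp only [Finset.mem_filter, Finset.HasAntidiagonal.mem_antidiagonal, Set.mem_Ioo] at ha
    rw [h a.1 (by omega), ih a.2 (by omega) (by omega) (by omega)]

end Multiset

namespace Polynomial

variable {R : Type*} [CommRing R] [IsDomain R]

theorem sum_toFinset_roots_rootMultiplicity_mul_pow [DecidableEq R] (p : R[X]) (j : ℕ) :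
    ∑ r ∈ p.roots.toFinset, (p.rootMultiplicity r : R) * r ^ j
      = (p.roots.map (· ^ j)).sum := by
  simp only [Finset.sum_multiset_map_count, count_roots, nsmul_eq_mul]

theorem esymm_roots_eq_of_degree_sub_lt {p q : R[X]} (hp : p.Monic) (hq : q.Monic)
    (hpr : p.roots.card = p.natDegree) (hqr : q.roots.card = q.natDegree)
    (hpq : p.natDegree = q.natDegree) {k : ℕ} (hsub : (p - q).degree < ↑(p.natDegree - k)) :
    p.roots.esymm k = q.roots.esymm k := by
  rcases le_or_gt k p.natDegree with hk | hk
  · have hcoeff : p.coeff (p.natDegree - k) = q.coeff (q.natDegree - k) := by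
      rw [← hpq, ← sub_eq_zero, ← coeff_sub]
      exact coeff_eq_zero_of_degree_lt hsub
    rw [coeff_eq_esymm_roots_of_card hpr (Nat.sub_le _ _),
      coeff_eq_esymm_roots_of_card hqr (hpq ▸ Nat.sub_le _ _), hp.leadingCoeff,
      hq.leadingCoeff, Nat.sub_sub_self hk, ← hpq, Nat.sub_sub_self hk] at hcoeff
    simpa using hcoeff
  · rw [Nat.sub_eq_zero_of_le hk.le] at hsub
    rw [sub_eq_zero.mp (degree_eq_bot.mp (Nat.WithBot.lt_zero_iff.mp hsub))]

theorem sum_roots_pow_eq_of_degree_sub_lt {p q : R[X]} (hp : p.Monic) (hq : q.Monic)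
    (hpr : p.roots.card = p.natDegree) (hqr : q.roots.card = q.natDegree)
    (hpq : p.natDegree = q.natDegree) {N : ℕ} (hsub : (p - q).degree < ↑(p.natDegree - N))
    {j : ℕ} (hj : 0 < j) (hjN : j ≤ N) :
    (p.roots.map (· ^ j)).sum = (q.roots.map (· ^ j)).sum :=
  Multiset.sum_map_pow_eq_of_esymm_eq (fun _ hk ↦ esymm_roots_eq_of_degree_sub_lt hp hq hpr hqr
    hpq (hsub.trans_le (by gcongr))) hj hjN

end Polynomial

theorem power_sums_coincide_general
    (m n : ℕ) (P Q : ℂ[X])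
    (hPm : P.Monic) (hQm : Q.Monic)
    (hP : P.natDegree = m + 1) (hQ : Q.natDegree = 2 * m + 2)
    (hdeg : (P ^ 2 - Q).degree ≤ ((n + 1 : ℕ) : WithBot ℕ)) :
    ∀ j : ℕ, 1 ≤ j → j ≤ 2 * m - n →
      2 * ∑ r ∈ P.roots.toFinset, (P.rootMultiplicity r : ℂ) * r ^ j
        = ∑ r ∈ Q.roots.toFinset, (Q.rootMultiplicity r : ℂ) * r ^ j := by
  intro j hj hjN
  have hP2 : (P ^ 2).natDegree = 2 * m + 2 := by rw [natDegree_pow, hP]; ring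
  have hsub : (P ^ 2 - Q).degree < ↑((P ^ 2).natDegree - (2 * m - n)) :=
    hdeg.trans_lt (by rw [hP2]; exact_mod_cast (by omega))
  have key := sum_roots_pow_eq_of_degree_sub_lt (hPm.pow 2) hQm
    IsAlgClosed.card_roots_eq_natDegree IsAlgClosed.card_roots_eq_natDegree
    (hP2.trans hQ.symm) hsub hj hjN
  rw [roots_pow, Multiset.map_nsmul, Multiset.sum_nsmul] at key
  rw [sum_toFinset_roots_rootMultiplicity_mul_pow, sum_toFinset_roots_rootMultiplicity_mul_pow,
    ← key, two_nsmul, two_mul]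

/-- If `P, Q` are monic complex polynomials with `deg P = m+1`, `deg Q = 2m+2`, and
`deg(P² - Q) ≤ n + 1` for some `n ≤ 2m - 1`, then for `1 ≤ j ≤ 2m - n` the `j`-th power
sums of the roots (with multiplicity) of `P²` and of `Q` coincide:
`2·∑_{P(r)=0} mult_P(r)·rʲ = ∑_{Q(r)=0} mult_Q(r)·rʲ`. -/
theorem power_sums_coincide
    (m n : ℕ) (hn : n + 1 ≤ 2 * m) (P Q : ℂ[X])
    (hPm : P.Monic) (hQm : Q.Monic)
    (hP : P.natDegree = m + 1) (hQ : Q.natDegree = 2 * m + 2)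
    (hdeg : (P ^ 2 - Q).degree ≤ ((n + 1 : ℕ) : WithBot ℕ)) :
    ∀ j : ℕ, 1 ≤ j → j ≤ 2 * m - n →
      2 * ∑ r ∈ P.roots.toFinset, (P.rootMultiplicity r : ℂ) * r ^ j
        = ∑ r ∈ Q.roots.toFinset, (Q.rootMultiplicity r : ℂ) * r ^ j :=
  power_sums_coincide_general m n P Q hPm hQm hP hQ hdeg
end

section
/- Let m and n be integers with n > 2m + 1, and let P, Q be real polynomials with deg P = m + 1 and deg Q = n + 1 such that every complex root of Q is a root of P. Then any collection of pairwise disjoint open intervals (a_i, b_i), where each a_i and each b_i is a simple real root of Q and Q(x) > 0 for all x ∈ (a_i, b_i), has at most ⌊m/2⌋ members. -/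
open Polynomial Filter Set Topology

lemma aux_deriv_nonneg_right (Q : ℝ[X]) {c d : ℝ} (hcd : c < d) (h0 : Q.eval c = 0)
    (hpos : ∀ x ∈ Set.Ioo c d, 0 < Q.eval x) : 0 ≤ (derivative Q).eval c := by
  have hd : HasDerivAt (fun x => Q.eval x) ((derivative Q).eval c) c := Q.hasDerivAt c
  rw [hasDerivAt_iff_tendsto_slope] at hd
  have h2 : Tendsto (slope (fun x => Q.eval x) c) (𝓝[>] c) (𝓝 ((derivative Q).eval c)) :=
    hd.mono_left (nhdsWithin_mono _ fun x hx => ne_of_gt hx)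
  refine ge_of_tendsto h2 ?_
  filter_upwards [Ioo_mem_nhdsGT_of_mem ⟨le_refl c, hcd⟩] with x hx
  rw [slope_def_field, h0, sub_zero]
  exact le_of_lt (div_pos (hpos x hx) (by linarith [hx.1]))

lemma aux_deriv_nonpos_left (Q : ℝ[X]) {c d : ℝ} (hdc : d < c) (h0 : Q.eval c = 0)
    (hpos : ∀ x ∈ Set.Ioo d c, 0 < Q.eval x) : (derivative Q).eval c ≤ 0 := by
  have hd : HasDerivAt (fun x => Q.eval x) ((derivative Q).eval c) c := Q.hasDerivAt c
  rw [hasDerivAt_iff_tendsto_slope] at hd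
  have h2 : Tendsto (slope (fun x => Q.eval x) c) (𝓝[<] c) (𝓝 ((derivative Q).eval c)) :=
    hd.mono_left (nhdsWithin_mono _ fun x hx => ne_of_lt hx)
  refine le_of_tendsto h2 ?_
  filter_upwards [Ioo_mem_nhdsLT_of_mem ⟨hdc, le_refl c⟩] with x hx
  rw [slope_def_field, h0, sub_zero]
  exact le_of_lt (div_neg_of_pos_of_neg (hpos x hx) (by linarith [hx.2]))

lemma aux_rm_le_one {K : Type*} [Field K] [CharZero K] (p : K[X]) (t : K)
    (h : (derivative p).eval t ≠ 0) : rootMultiplicity t p ≤ 1 := by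
  by_contra hlt
  push_neg at hlt
  have h1 : p.IsRoot t := (rootMultiplicity_pos'.mp (by omega)).2
  have h2 := derivative_rootMultiplicity_of_root h1
  have h3 : 0 < rootMultiplicity t (derivative p) := by omega
  exact h ((rootMultiplicity_pos'.mp h3).2)

/-- Upper bound for `n > 2m + 1`: if `deg P = m + 1`, `deg Q = n + 1` and every complex
root of `Q` is a root of `P`, then any collection of pairwise disjoint open intervals
whose endpoints are simple real roots of `Q` and on which `Q > 0` has at most `⌊m/2⌋`
members. -/
theorem upper_bound_large_n
    (m n : ℕ) (hn : 2 * m + 1 < n) (P Q : ℝ[X])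
    (hP : P.degree = ((m + 1 : ℕ) : WithBot ℕ))
    (hQ : Q.degree = ((n + 1 : ℕ) : WithBot ℕ))
    (hroots : ∀ z : ℂ, Polynomial.aeval z Q = 0 → Polynomial.aeval z P = 0)
    (k : ℕ) (a b : Fin k → ℝ)
    (hab : ∀ i, a i < b i)
    (hdisj : ∀ i j, i ≠ j → Disjoint (Set.Ioo (a i) (b i)) (Set.Ioo (a j) (b j)))
    (hsa : ∀ i, Q.eval (a i) = 0 ∧ (derivative Q).eval (a i) ≠ 0)
    (hsb : ∀ i, Q.eval (b i) = 0 ∧ (derivative Q).eval (b i) ≠ 0)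
    (hpos : ∀ i, ∀ x ∈ Set.Ioo (a i) (b i), 0 < Q.eval x) :
    k ≤ m / 2 := by
  classical
  have hPnat : P.natDegree = m + 1 := natDegree_eq_of_degree_eq_some hP
  have hPne : P ≠ 0 := by
    intro h; rw [h, natDegree_zero] at hPnat; omega
  -- endpoints a i ≠ b j
  have hne : ∀ i j, a i ≠ b j := by
    intro i j h
    have h1 := aux_deriv_nonneg_right Q (hab i) (hsa i).1 (hpos i)
    have h2 := aux_deriv_nonpos_left Q (hab j) (hsb j).1 (hpos j)
    rw [← h] at h2
    exact (hsa i).2 (le_antisymm h2 h1)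
  have ha_inj : Function.Injective a := by
    intro i j hij
    by_contra hne'
    have hd := hdisj i j hne'
    set x := (a i + min (b i) (b j)) / 2 with hx
    have hm : a i < min (b i) (b j) := lt_min (hab i) (hij ▸ hab j)
    have hx1 : a i < x := by rw [hx]; linarith
    have hx2 : x < min (b i) (b j) := by rw [hx]; linarith
    exact Set.disjoint_left.mp hd ⟨hx1, lt_of_lt_of_le hx2 (min_le_left _ _)⟩
      ⟨hij ▸ hx1, lt_of_lt_of_le hx2 (min_le_right _ _)⟩
  have hb_inj : Function.Injective b := by
    intro i j hij
    by_contra hne'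
    have hd := hdisj i j hne'
    set x := (max (a i) (a j) + b i) / 2 with hx
    have hm : max (a i) (a j) < b i := max_lt (hab i) (hij ▸ hab j)
    have hx1 : max (a i) (a j) < x := by rw [hx]; linarith
    have hx2 : x < b i := by rw [hx]; linarith
    exact Set.disjoint_left.mp hd ⟨lt_of_le_of_lt (le_max_left _ _) hx1, hx2⟩
      ⟨lt_of_le_of_lt (le_max_right _ _) hx1, hij ▸ hx2⟩
  set T : Finset ℝ := Finset.image a Finset.univ ∪ Finset.image b Finset.univ with hT
  have hTd : Disjoint (Finset.image a Finset.univ) (Finset.image b Finset.univ) := by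
    rw [Finset.disjoint_left]
    rintro x hx1 hx2
    obtain ⟨i, _, rfl⟩ := Finset.mem_image.mp hx1
    obtain ⟨j, _, hj⟩ := Finset.mem_image.mp hx2
    exact hne i j hj.symm
  have hTcard : T.card = 2 * k := by
    rw [hT, Finset.card_union_of_disjoint hTd, Finset.card_image_of_injective _ ha_inj,
      Finset.card_image_of_injective _ hb_inj, Finset.card_univ, Fintype.card_fin]
    ring
  have hTroot : ∀ t ∈ T, Q.eval t = 0 ∧ (derivative Q).eval t ≠ 0 := by
    intro t ht
    rcases Finset.mem_union.mp ht with h | h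
    · obtain ⟨i, _, rfl⟩ := Finset.mem_image.mp h; exact hsa i
    · obtain ⟨i, _, rfl⟩ := Finset.mem_image.mp h; exact hsb i
  set Pc := P.map (algebraMap ℝ ℂ) with hPc
  set Qc := Q.map (algebraMap ℝ ℂ) with hQc
  have hPcne : Pc ≠ 0 := by
    rw [hPc]; exact (Polynomial.map_ne_zero_iff (algebraMap ℝ ℂ).injective).mpr hPne
  -- evaluation transfer
  have heval : ∀ (R : ℝ[X]) (t : ℝ), (R.map (algebraMap ℝ ℂ)).eval (t : ℂ)
      = algebraMap ℝ ℂ (R.eval t) := by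
    intro R t
    rw [eval_map]
    exact eval₂_at_apply (algebraMap ℝ ℂ) t
  have haev : ∀ (R : ℝ[X]) (z : ℂ), Polynomial.aeval z R = (R.map (algebraMap ℝ ℂ)).eval z := by
    intro R z
    rw [aeval_def, eval_map]
  set Tc : Finset ℂ := T.image Complex.ofReal with hTcDef
  have hTcCard : Tc.card = 2 * k := by
    rw [hTcDef, Finset.card_image_of_injective _ Complex.ofReal_injective, hTcard]
  have hTcP : Tc ⊆ Pc.roots.toFinset := by
    intro z hz
    obtain ⟨t, ht, rfl⟩ := Finset.mem_image.mp hz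
    have hq0 : Polynomial.aeval (t : ℂ) Q = 0 := by
      rw [haev, heval, (hTroot t ht).1, map_zero]
    have hp0 := hroots _ hq0
    rw [haev] at hp0
    rw [Multiset.mem_toFinset, mem_roots hPcne]
    exact hp0
  have hPcdeg : Pc.natDegree = m + 1 := by
    rw [hPc, natDegree_map, hPnat]
  have hkm1 : 2 * k ≤ m + 1 := by
    calc 2 * k = Tc.card := hTcCard.symm
    _ ≤ Pc.roots.toFinset.card := Finset.card_le_card hTcP
    _ ≤ Multiset.card Pc.roots := Multiset.toFinset_card_le _
    _ ≤ Pc.natDegree := Pc.card_roots'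
    _ = m + 1 := hPcdeg
  rcases Nat.lt_or_ge (2 * k) (m + 1) with h | h
  · omega
  -- Now 2 * k = m + 1; derive contradiction
  exfalso
  have h2k : 2 * k = m + 1 := le_antisymm hkm1 h
  have hTcEq : Tc = Pc.roots.toFinset := by
    apply Finset.eq_of_subset_of_card_le hTcP
    rw [hTcCard, h2k]
    calc Pc.roots.toFinset.card ≤ Multiset.card Pc.roots := Multiset.toFinset_card_le _
    _ ≤ Pc.natDegree := Pc.card_roots'
    _ = m + 1 := hPcdeg
  have hQcne : Qc ≠ 0 := by
    rw [hQc]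
    refine (Polynomial.map_ne_zero_iff (algebraMap ℝ ℂ).injective).mpr ?_
    intro h
    have hQnat : Q.natDegree = n + 1 := natDegree_eq_of_degree_eq_some hQ
    rw [h, natDegree_zero] at hQnat; omega
  have hQcroots : Qc.roots.toFinset ⊆ Tc := by
    intro z hz
    rw [Multiset.mem_toFinset, mem_roots hQcne] at hz
    have hq0 : Polynomial.aeval z Q = 0 := by rw [haev]; exact hz
    have hp0 := hroots _ hq0
    rw [haev] at hp0
    rw [hTcEq, Multiset.mem_toFinset, mem_roots hPcne]
    exact hp0
  have hQcdeg : Qc.natDegree = n + 1 := by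
    rw [hQc, natDegree_map, natDegree_eq_of_degree_eq_some hQ]
  have hsplit : Multiset.card Qc.roots = n + 1 := by
    rw [← hQcdeg]
    exact (splits_iff_card_roots.mp (IsAlgClosed.splits Qc)).symm ▸ rfl
  have hcount : ∀ z ∈ Tc, Qc.roots.count z ≤ 1 := by
    intro z hz
    obtain ⟨t, ht, rfl⟩ := Finset.mem_image.mp hz
    rw [count_roots]
    apply aux_rm_le_one
    rw [hQc, derivative_map, heval]
    simpa using (hTroot t ht).2
  have hsum : Multiset.card Qc.roots ≤ Tc.card := by
    rw [← Multiset.toFinset_sum_count_eq]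
    calc ∑ z ∈ Qc.roots.toFinset, Qc.roots.count z
        ≤ ∑ z ∈ Tc, Qc.roots.count z :=
          Finset.sum_le_sum_of_subset hQcroots
    _ ≤ ∑ _z ∈ Tc, 1 := Finset.sum_le_sum hcount
    _ = Tc.card := by simp
  rw [hsplit, hTcCard, h2k] at hsum
  omega
end

section
/- Let m ≥ 4 be an integer and let P, Q be real polynomials with deg P = m + 1, deg Q = 2m + 2, deg(P² - Q) ≤ 2m + 1, such that every complex root of Q is a root of P. Then any collection of pairwise disjoint open intervals (a_i, b_i), where each a_i and each b_i is a simple real root of Q and Q(x) > 0 for all x ∈ (a_i, b_i), has at most ⌊(m-1)/2⌋ members. (Note ⌊(m-1)/2⌋ = ⌊(n-1)/4⌋ for n = 2m - 1 and for n = 2m, so this gives the upper bound H(m,n) ≤ ⌊(n-1)/4⌋ for n ∈ {2m-1, 2m}.) -/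
open Polynomial Filter Set

/-- If `f` vanishes at `s` with negative derivative, then `f < 0` just to the right of `s`. -/
private lemma aux_eval_neg_right (f : Polynomial ℝ) (s : ℝ) (h0 : f.eval s = 0)
    (hd : (derivative f).eval s < 0) : ∀ᶠ x in nhdsWithin s (Set.Ioi s), f.eval x < 0 := by
  have hder : HasDerivAt (fun x => f.eval x) ((derivative f).eval s) s := f.hasDerivAt s
  rw [hasDerivAt_iff_tendsto_slope] at hder
  have h1 : ∀ᶠ x in nhdsWithin s {s}ᶜ, slope (fun x => f.eval x) s x < 0 :=
    hder.eventually (gt_mem_nhds hd)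
  have h2 : ∀ᶠ x in nhdsWithin s (Set.Ioi s), slope (fun x => f.eval x) s x < 0 :=
    h1.filter_mono (nhdsWithin_mono s (fun x hx => ne_of_gt hx))
  filter_upwards [h2, eventually_mem_nhdsWithin] with x hx hxs
  have hxspos : (0:ℝ) < x - s := sub_pos.2 hxs
  have hne : x - s ≠ 0 := ne_of_gt hxspos
  have hmul := mul_neg_of_neg_of_pos hx hxspos
  rw [slope_def_field, div_mul_cancel₀ _ hne] at hmul
  simpa [h0] using hmul

/-- If `f` vanishes at `s` with positive derivative, then `f < 0` just to the left of `s`. -/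
private lemma aux_eval_neg_left (f : Polynomial ℝ) (s : ℝ) (h0 : f.eval s = 0)
    (hd : 0 < (derivative f).eval s) : ∀ᶠ x in nhdsWithin s (Set.Iio s), f.eval x < 0 := by
  have hder : HasDerivAt (fun x => f.eval x) ((derivative f).eval s) s := f.hasDerivAt s
  rw [hasDerivAt_iff_tendsto_slope] at hder
  have h1 : ∀ᶠ x in nhdsWithin s {s}ᶜ, 0 < slope (fun x => f.eval x) s x :=
    hder.eventually (lt_mem_nhds hd)
  have h2 : ∀ᶠ x in nhdsWithin s (Set.Iio s), 0 < slope (fun x => f.eval x) s x :=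
    h1.filter_mono (nhdsWithin_mono s (fun x hx => ne_of_lt hx))
  filter_upwards [h2, eventually_mem_nhdsWithin] with x hx hxs
  have hxsneg : x - s < 0 := sub_neg.2 hxs
  have hne : x - s ≠ 0 := ne_of_lt hxsneg
  have hmul := mul_neg_of_pos_of_neg hx hxsneg
  rw [slope_def_field, div_mul_cancel₀ _ hne] at hmul
  simpa [h0] using hmul

/-- Upper bound for `n ∈ {2m-1, 2m}`, `m ≥ 4`: if `deg P = m + 1`, `deg Q = 2m + 2`,
`deg(P² - Q) ≤ 2m + 1` and every complex root of `Q` is a root of `P`, then any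
collection of pairwise disjoint open intervals whose endpoints are simple real roots of
`Q` and on which `Q > 0` has at most `⌊(m-1)/2⌋` members. -/
theorem upper_bound_n_near_2m
    (m : ℕ) (hm : 4 ≤ m) (P Q : ℝ[X])
    (hP : P.degree = ((m + 1 : ℕ) : WithBot ℕ))
    (hQ : Q.degree = ((2 * m + 2 : ℕ) : WithBot ℕ))
    (hdeg : (P ^ 2 - Q).degree ≤ ((2 * m + 1 : ℕ) : WithBot ℕ))
    (hroots : ∀ z : ℂ, Polynomial.aeval z Q = 0 → Polynomial.aeval z P = 0)
    (k : ℕ) (a b : Fin k → ℝ)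
    (hab : ∀ i, a i < b i)
    (hdisj : ∀ i j, i ≠ j → Disjoint (Set.Ioo (a i) (b i)) (Set.Ioo (a j) (b j)))
    (hsa : ∀ i, Q.eval (a i) = 0 ∧ (derivative Q).eval (a i) ≠ 0)
    (hsb : ∀ i, Q.eval (b i) = 0 ∧ (derivative Q).eval (b i) ≠ 0)
    (hpos : ∀ i, ∀ x ∈ Set.Ioo (a i) (b i), 0 < Q.eval x) :
    k ≤ (m - 1) / 2 := by
  by_contra hk
  push_neg at hk
  have hdivlt := (Nat.div_lt_iff_lt_mul (by norm_num : 0 < 2)).1 hk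
  have hm2k : m ≤ 2 * k := by omega
  have hk1 : 1 ≤ k := by omega
  have hPnd : P.natDegree = m + 1 := natDegree_eq_of_degree_eq_some hP
  have hQnd : Q.natDegree = 2 * m + 2 := natDegree_eq_of_degree_eq_some hQ
  have hP0 : P ≠ 0 := fun h => by rw [h, natDegree_zero] at hPnd; omega
  have hQ0 : Q ≠ 0 := fun h => by rw [h, natDegree_zero] at hQnd; omega
  -- real roots of `Q` are roots of `P`
  have hPQ : ∀ x : ℝ, Q.eval x = 0 → P.eval x = 0 := by
    intro x hx
    have h1 : (aeval (algebraMap ℝ ℂ x)) Q = 0 := by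
      rw [aeval_algebraMap_apply_eq_algebraMap_eval, hx, map_zero]
    have h2 := hroots _ h1
    rw [aeval_algebraMap_apply_eq_algebraMap_eval] at h2
    rw [show (algebraMap ℝ ℂ) (eval x P) = ((eval x P : ℝ) : ℂ) from rfl,
      Complex.ofReal_eq_zero] at h2
    exact h2
  -- derivative of `Q` is positive at left endpoints
  have hQa' : ∀ i, 0 < (derivative Q).eval (a i) := by
    intro i
    rcases (hsa i).2.lt_or_gt with hlt | hgt
    · exfalso
      have h1 := aux_eval_neg_right Q (a i) (hsa i).1 hlt
      have h2 : ∀ᶠ x in nhdsWithin (a i) (Set.Ioi (a i)), x ∈ Set.Ioo (a i) (b i) :=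
        Ioo_mem_nhdsGT_of_mem ⟨le_rfl, hab i⟩
      obtain ⟨x, hx1, hx2⟩ := (h1.and h2).exists
      exact absurd (hpos i x hx2) (by linarith)
    · exact hgt
  -- derivative of `Q` is negative at right endpoints
  have hQb' : ∀ i, (derivative Q).eval (b i) < 0 := by
    intro i
    rcases (hsb i).2.lt_or_gt with hlt | hgt
    · exact hlt
    · exfalso
      have h1 := aux_eval_neg_left Q (b i) (hsb i).1 hgt
      have h2 : ∀ᶠ x in nhdsWithin (b i) (Set.Iio (b i)), x ∈ Set.Ioo (a i) (b i) :=
        Ioo_mem_nhdsLT_of_mem ⟨hab i, le_rfl⟩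
      obtain ⟨x, hx1, hx2⟩ := (h1.and h2).exists
      exact absurd (hpos i x hx2) (by linarith)
  -- the endpoints are pairwise distinct
  have hanb : ∀ i j, a i ≠ b j := by
    intro i j h
    have h1 := hQa' i
    have h2 := hQb' j
    rw [h] at h1
    linarith
  have hainj : Function.Injective a := by
    intro i j hij
    by_contra hne
    have hd := Set.disjoint_left.1 (hdisj i j hne)
    set x := (a i + min (b i) (b j)) / 2 with hx
    have hxi : x ∈ Set.Ioo (a i) (b i) := by
      constructor
      · have : a i < min (b i) (b j) := lt_min (hab i) (by rw [hij]; exact hab j)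
        simp only [hx]; linarith
      · have h1 : min (b i) (b j) ≤ b i := min_le_left _ _
        have : a i < b i := hab i
        simp only [hx]
        have : a i < min (b i) (b j) := lt_min (hab i) (by rw [hij]; exact hab j)
        linarith
    have hxj : x ∈ Set.Ioo (a j) (b j) := by
      constructor
      · have : a i < min (b i) (b j) := lt_min (hab i) (by rw [hij]; exact hab j)
        rw [← hij]; simp only [hx]; linarith
      · have h1 : min (b i) (b j) ≤ b j := min_le_right _ _
        have : a i < min (b i) (b j) := lt_min (hab i) (by rw [hij]; exact hab j)
        simp only [hx]; linarith
    exact hd hxi hxj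
  have hbinj : Function.Injective b := by
    intro i j hij
    by_contra hne
    have hd := Set.disjoint_left.1 (hdisj i j hne)
    set x := (max (a i) (a j) + b i) / 2 with hx
    have hmax : max (a i) (a j) < b i := by
      apply max_lt (hab i)
      rw [hij]
      exact hab j
    have hxi : x ∈ Set.Ioo (a i) (b i) := by
      constructor
      · have h1 : a i ≤ max (a i) (a j) := le_max_left _ _
        simp only [hx]; linarith
      · simp only [hx]; linarith
    have hxj : x ∈ Set.Ioo (a j) (b j) := by
      constructor
      · have h1 : a j ≤ max (a i) (a j) := le_max_right _ _
        simp only [hx]; linarith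
      · rw [← hij]; simp only [hx]; linarith
    exact hd hxi hxj
  -- the finset of endpoints
  set S : Finset ℝ := (Finset.image a Finset.univ) ∪ (Finset.image b Finset.univ) with hS
  have hScard : S.card = 2 * k := by
    rw [hS, Finset.card_union_of_disjoint]
    · rw [Finset.card_image_of_injective _ hainj, Finset.card_image_of_injective _ hbinj,
        Finset.card_univ, Fintype.card_fin]
      ring
    · rw [Finset.disjoint_left]
      rintro x hx1 hx2
      simp only [Finset.mem_image, Finset.mem_univ, true_and] at hx1 hx2
      obtain ⟨i, rfl⟩ := hx1
      obtain ⟨j, hj⟩ := hx2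
      exact hanb i j hj.symm
  have hSroot : ∀ s ∈ S, P.IsRoot s := by
    intro s hs
    simp only [hS, Finset.mem_union, Finset.mem_image, Finset.mem_univ, true_and] at hs
    rcases hs with ⟨i, rfl⟩ | ⟨i, rfl⟩
    · exact hPQ _ (hsa i).1
    · exact hPQ _ (hsb i).1
  -- the product of linear factors over endpoints divides `P`
  set E : ℝ[X] := ∏ s ∈ S, (X - C s) with hE
  have hle : S.val ≤ P.roots := by
    rw [Multiset.le_iff_count]
    intro s
    by_cases hs : s ∈ S
    · have h1 : Multiset.count s S.val = 1 :=
        Multiset.count_eq_one_of_mem S.nodup (Finset.mem_def.mp hs)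
      rw [h1, count_roots]
      exact (rootMultiplicity_pos hP0).2 (hSroot s hs)
    · have h1 : Multiset.count s S.val = 0 :=
        Multiset.count_eq_zero.2 (fun h => hs (Finset.mem_def.mpr h))
      rw [h1]
      exact Nat.zero_le _
  have hEdvd : E ∣ P := by
    rw [hE, Finset.prod_eq_multiset_prod]
    exact (Multiset.prod_dvd_prod_of_le (Multiset.map_le_map hle)).trans
      P.prod_multiset_X_sub_C_dvd
  obtain ⟨L, hPEL⟩ := hEdvd
  have hEne : ∀ s ∈ S, (X - C s : ℝ[X]) ≠ 0 := fun s _ => X_sub_C_ne_zero s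
  have hE0 : E ≠ 0 := by
    rw [hE]
    exact Finset.prod_ne_zero_iff.2 hEne
  have hL0 : L ≠ 0 := by
    intro h
    rw [h, mul_zero] at hPEL
    exact hP0 hPEL
  have hEnd : E.natDegree = 2 * k := by
    rw [hE, natDegree_prod _ _ hEne]
    simp [natDegree_X_sub_C, hScard]
  have hLnd : L.natDegree ≤ 1 := by
    have h1 : P.natDegree = E.natDegree + L.natDegree := by
      rw [hPEL, natDegree_mul hE0 hL0]
    omega
  -- leading coefficient of `Q` is positive
  have hQlc : 0 < Q.leadingCoeff := by
    have h1 : (P ^ 2 - Q).coeff (2 * m + 2) = 0 := by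
      apply coeff_eq_zero_of_degree_lt
      refine lt_of_le_of_lt hdeg ?_
      exact_mod_cast Nat.lt_succ_self (2 * m + 1)
    rw [coeff_sub, sub_eq_zero] at h1
    have h3 : (P ^ 2).natDegree = 2 * m + 2 := by rw [natDegree_pow, hPnd]; ring
    have h4 : (P ^ 2).coeff (2 * m + 2) = (P ^ 2).leadingCoeff := by
      rw [leadingCoeff, h3]
    have hlc : P.leadingCoeff ≠ 0 := leadingCoeff_ne_zero.2 hP0
    have : Q.leadingCoeff = P.leadingCoeff ^ 2 := by
      rw [leadingCoeff, hQnd, ← h1, h4, leadingCoeff_pow]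
    rw [this]
    positivity
  -- `Q` is eventually positive at `+∞` and `-∞`
  have hQdegpos : 0 < Q.degree := by
    rw [hQ]
    exact_mod_cast Nat.pos_of_ne_zero (by omega)
  have htop : Tendsto (fun x => Q.eval x) atTop atTop :=
    Q.tendsto_atTop_of_leadingCoeff_nonneg hQdegpos hQlc.le
  have hbot : Tendsto (fun x => Q.eval (-x)) atTop atTop := by
    have hXnd : (-X : ℝ[X]).natDegree ≠ 0 := by
      rw [natDegree_neg, natDegree_X]; norm_num
    have hQ2nd : (Q.comp (-X)).natDegree = 2 * m + 2 := by
      rw [natDegree_comp, hQnd, natDegree_neg, natDegree_X, mul_one]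
    have hQ2lc : (Q.comp (-X)).leadingCoeff = Q.leadingCoeff := by
      rw [leadingCoeff_comp hXnd, hQnd]
      have : (-X : ℝ[X]).leadingCoeff = -1 := by
        rw [leadingCoeff_neg, leadingCoeff_X]
      rw [this]
      rw [show (2 * m + 2) = 2 * (m + 1) by ring, pow_mul]
      norm_num
    have hQ2deg : 0 < (Q.comp (-X)).degree := by
      rw [degree_eq_natDegree (fun h => by simp [h] at hQ2nd), hQ2nd]
      exact_mod_cast Nat.pos_of_ne_zero (by omega)
    have h := (Q.comp (-X)).tendsto_atTop_of_leadingCoeff_nonneg hQ2deg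
      (by rw [hQ2lc]; exact hQlc.le)
    have heq : (fun x => (Q.comp (-X)).eval x) = fun x => Q.eval (-x) := by
      funext x
      rw [eval_comp, eval_neg, eval_X]
    rwa [heq] at h
  -- min and max endpoints
  have hSne : S.Nonempty := ⟨a ⟨0, hk1⟩, by simp [hS]⟩
  set smin := S.min' hSne with hsmin
  set smax := S.max' hSne with hsmax
  have hminmax : smin ≤ smax := by
    rw [hsmin, hsmax]
    exact S.min'_le _ (S.max'_mem hSne)
  obtain ⟨i0, hi0⟩ : ∃ i, smin = a i := by
    have hmem : smin ∈ Finset.image a Finset.univ ∪ Finset.image b Finset.univ := by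
      rw [← hS]
      exact S.min'_mem hSne
    simp only [Finset.mem_union, Finset.mem_image, Finset.mem_univ, true_and] at hmem
    rcases hmem with ⟨i, h⟩ | ⟨i, h⟩
    · exact ⟨i, h.symm⟩
    · exfalso
      have hmem2 : a i ∈ S := by simp [hS]
      have h2 : smin ≤ a i := by rw [hsmin]; exact S.min'_le _ hmem2
      have h3 := hab i
      rw [h] at h3
      linarith
  obtain ⟨i1, hi1⟩ : ∃ i, smax = b i := by
    have hmem : smax ∈ Finset.image a Finset.univ ∪ Finset.image b Finset.univ := by
      rw [← hS]
      exact S.max'_mem hSne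
    simp only [Finset.mem_union, Finset.mem_image, Finset.mem_univ, true_and] at hmem
    rcases hmem with ⟨i, h⟩ | ⟨i, h⟩
    · exfalso
      have hmem2 : b i ∈ S := by simp [hS]
      have h2 : b i ≤ smax := by rw [hsmax]; exact S.le_max' _ hmem2
      have h3 := hab i
      rw [h] at h3
      linarith
    · exact ⟨i, h.symm⟩
  -- a root of `Q` strictly left of all endpoints
  obtain ⟨t, htlt, htroot⟩ : ∃ t, t < smin ∧ Q.eval t = 0 := by
    have h1 := aux_eval_neg_left Q (a i0) (hsa i0).1 (hQa' i0)
    rw [← hi0] at h1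
    obtain ⟨v, hv1, hv2⟩ := (h1.and eventually_mem_nhdsWithin).exists
    obtain ⟨w, hw1, hw2⟩ := ((hbot.eventually_gt_atTop 0).and (eventually_gt_atTop (-v))).exists
    have huv : -w < v := by linarith
    have hIVT := intermediate_value_Icc' huv.le ((Polynomial.continuous Q).continuousOn)
    have h0mem : (0:ℝ) ∈ Set.Icc (Q.eval v) (Q.eval (-w)) := ⟨hv1.le, hw1.le⟩
    obtain ⟨t, ht1, ht2⟩ := hIVT h0mem
    exact ⟨t, lt_of_le_of_lt ht1.2 hv2, ht2⟩
  -- a root of `Q` strictly right of all endpoints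
  obtain ⟨t', htlt', htroot'⟩ : ∃ t', smax < t' ∧ Q.eval t' = 0 := by
    have h1 := aux_eval_neg_right Q (b i1) (hsb i1).1 (hQb' i1)
    rw [← hi1] at h1
    obtain ⟨v, hv1, hv2⟩ := (h1.and eventually_mem_nhdsWithin).exists
    obtain ⟨w, hw1, hw2⟩ := ((htop.eventually_gt_atTop 0).and (eventually_gt_atTop v)).exists
    have hIVT := intermediate_value_Icc hw2.le (Polynomial.continuous Q).continuousOn
    have h0mem : (0:ℝ) ∈ Set.Icc (Q.eval v) (Q.eval w) := ⟨hv1.le, hw1.le⟩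
    obtain ⟨t, ht1, ht2⟩ := hIVT h0mem
    exact ⟨t, lt_of_lt_of_le hv2 ht1.1, ht2⟩
  -- `t` and `t'` are roots of `P` outside the endpoints, hence roots of `L`
  have htE : E.eval t ≠ 0 := by
    rw [hE, eval_prod]
    refine Finset.prod_ne_zero_iff.2 fun s hs => ?_
    have hle' : smin ≤ s := by rw [hsmin]; exact S.min'_le _ hs
    simp only [eval_sub, eval_X, eval_C]
    exact sub_ne_zero.2 (by linarith)
  have htE' : E.eval t' ≠ 0 := by
    rw [hE, eval_prod]
    refine Finset.prod_ne_zero_iff.2 fun s hs => ?_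
    have hle' : s ≤ smax := by rw [hsmax]; exact S.le_max' _ hs
    simp only [eval_sub, eval_X, eval_C]
    exact sub_ne_zero.2 (by linarith)
  have hLt : L.eval t = 0 := by
    have h := hPQ t htroot
    rw [hPEL, eval_mul] at h
    exact (mul_eq_zero.1 h).resolve_left htE
  have hLt' : L.eval t' = 0 := by
    have h := hPQ t' htroot'
    rw [hPEL, eval_mul] at h
    exact (mul_eq_zero.1 h).resolve_left htE'
  have htne : t ≠ t' := by
    intro h
    rw [h] at htlt
    linarith
  have h2le : 2 ≤ L.natDegree := by
    have hsub : ({t, t'} : Finset ℝ) ⊆ L.roots.toFinset := by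
      intro x hx
      rw [Multiset.mem_toFinset, mem_roots hL0]
      simp only [Finset.mem_insert, Finset.mem_singleton] at hx
      rcases hx with rfl | rfl
      · exact hLt
      · exact hLt'
    calc (2:ℕ) = ({t, t'} : Finset ℝ).card := (Finset.card_pair htne).symm
      _ ≤ L.roots.toFinset.card := Finset.card_le_card hsub
      _ ≤ Multiset.card L.roots := L.roots.toFinset_card_le
      _ ≤ L.natDegree := L.card_roots'
  omega
end

section
/- Let m ≥ 2 and n ≥ 2m + 1 be integers. There exists s₀ > 0 such that for every real s ≥ s₀, setting P(x) = (x + s)·∏_{i=1}^{m}(x - i) and Q(x) = -s·(x + s)^{n-m+1}·∏_{i=1}^{m}(x - i), the following hold: there exist real polynomials f of degree m and g of degree n with 2·Q·f = 2·Q·P' + P·Q' and 2·Q·g = Q'·(P² - Q); all complex roots of Q are real; and for each i = 1, …, ⌊m/2⌋, the interval I_i (equal to [2i-1, 2i] if m is even and to [2i, 2i+1] if m is odd) has endpoints that are simple roots of Q, Q(x) > 0 and P(x)² - Q(x) < 0 for all x in the interior of I_i, and f(α) ≠ 0 for every α in the interior of I_i with Q'(α) = 0. (This proves the lower bound H(m,n)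 ≥ ⌊m/2⌋ for n ≥ 2m + 1.) -/
open Polynomial

private lemma deg_aux_hlc (p : ℝ[X]) (k : ℕ) (hle : ∀ j, k < j → p.coeff j = 0)
    (h : p.coeff k ≠ 0) : p.degree = k := by
  refine le_antisymm ?_ (le_degree_of_ne_zero h)
  rw [degree_le_iff_coeff_zero]
  intro j hj
  exact hle j (by exact_mod_cast hj)

private lemma prod_neg_of_odd_hlc {s : Finset ℕ} {f : ℕ → ℝ} (h : ∀ i ∈ s, f i < 0)
    (hcard : Odd s.card) : ∏ i ∈ s, f i < 0 := by
  have h1 : ∏ i ∈ s, f i = (-1)^s.card * ∏ i ∈ s, (-f i) := by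
    rw [← Finset.prod_const (-1:ℝ), ← Finset.prod_mul_distrib]
    simp
  rw [h1, hcard.neg_one_pow]
  have h2 : 0 < ∏ i ∈ s, (-f i) := Finset.prod_pos fun i hi => by linarith [h i hi]
  nlinarith

set_option maxHeartbeats 2000000 in
/-- Lower bound for `n ≥ 2m + 1`, `m ≥ 2`: with `P(x) = (x+s)·∏_{i=1}^m (x-i)` and
`Q(x) = -s·(x+s)^(n-m+1)·∏_{i=1}^m (x-i)` for large `s`, the associated Liénard system
of type `(m,n)` has `⌊m/2⌋` hyperelliptic limit cycles, one over each interval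
`[2i-1, 2i]` (`m` even) resp. `[2i, 2i+1]` (`m` odd), `i = 1, …, ⌊m/2⌋`; hence
`H(m,n) ≥ ⌊m/2⌋`. -/
theorem lower_bound_case_iii
    (m n : ℕ) (hm : 2 ≤ m) (hn : 2 * m + 1 ≤ n) :
    ∃ s₀ : ℝ, 0 < s₀ ∧ ∀ s : ℝ, s₀ ≤ s →
      ∀ P Q : ℝ[X],
        P = (X + C s) * ∏ i ∈ Finset.range m, (X - C ((i : ℝ) + 1)) →
        Q = C (-s) * (X + C s) ^ (n - m + 1) * ∏ i ∈ Finset.range m, (X - C ((i : ℝ) + 1)) →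
        ∃ f g : ℝ[X],
          f.degree = (m : ℕ) ∧ g.degree = (n : ℕ) ∧
          2 * Q * f = 2 * Q * derivative P + P * derivative Q ∧
          2 * Q * g = derivative Q * (P ^ 2 - Q) ∧
          (∀ z : ℂ, Polynomial.aeval z Q = 0 → z.im = 0) ∧
          (∀ i : Fin (m / 2),
            ∀ lo hi : ℝ,
              lo = (if m % 2 = 0 then (2 * (i : ℕ) + 1 : ℝ) else (2 * (i : ℕ) + 2 : ℝ)) →
              hi = lo + 1 →
              Q.eval lo = 0 ∧ (derivative Q).eval lo ≠ 0 ∧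
              Q.eval hi = 0 ∧ (derivative Q).eval hi ≠ 0 ∧
              (∀ x ∈ Set.Ioo lo hi, 0 < Q.eval x ∧ (P.eval x) ^ 2 - Q.eval x < 0) ∧
              (∀ α ∈ Set.Ioo lo hi, (derivative Q).eval α = 0 → f.eval α ≠ 0)) := by
  refine ⟨((m:ℝ)+1)^m + 1, by positivity, ?_⟩
  intro s hs P Q hP hQ
  have hMm : (0:ℝ) ≤ ((m:ℝ)+1)^m := by positivity
  have hs1 : (1:ℝ) ≤ s := by linarith
  have hs0 : (0:ℝ) < s := by linarith
  obtain ⟨d, hd⟩ : ∃ d, d = n - m := ⟨_, rfl⟩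
  rw [← hd] at hQ
  have hdm : m + 1 ≤ d := by omega
  obtain ⟨B, hB⟩ : ∃ B : ℝ[X], B = ∏ i ∈ Finset.range m, (X - C ((i : ℝ) + 1)) := ⟨_, rfl⟩
  rw [← hB] at hP hQ
  -- basic structure facts
  have hBm : B.Monic := by rw [hB]; exact monic_prod_of_monic _ _ fun i _ => monic_X_sub_C _
  have hBdeg : B.natDegree = m := by
    rw [hB, natDegree_prod_of_monic _ _ fun i _ => monic_X_sub_C _]
    simp only [natDegree_X_sub_C, Finset.sum_const, smul_eq_mul, mul_one, Finset.card_range]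
  have hPm : P.Monic := by rw [hP]; exact (monic_X_add_C s).mul hBm
  have hPdeg : P.natDegree = m + 1 := by
    rw [hP, (monic_X_add_C s).natDegree_mul hBm, natDegree_X_add_C, hBdeg, add_comm]
  have hP' : derivative P = B + (X + C s) * derivative B := by
    rw [hP, derivative_mul]; simp
  have hdQ : derivative Q = C (-s) * (X + C s)^d * (C (d:ℝ) * B + derivative P) := by
    rw [hQ, hP', derivative_mul, derivative_mul, derivative_pow]
    simp only [derivative_C, derivative_add, derivative_X, zero_mul, add_zero, zero_add,
      Nat.add_sub_cancel, mul_one, C_eq_natCast]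
    push_cast
    ring
  -- coefficient facts
  have hPcoeff : P.coeff (m+1) = 1 := by
    have := hPm.coeff_natDegree; rwa [hPdeg] at this
  have hPcoeff0 : ∀ j, m+1 < j → P.coeff j = 0 := fun j hj =>
    coeff_eq_zero_of_natDegree_lt (by omega)
  have hdP0 : ∀ j, m < j → (derivative P).coeff j = 0 := fun j hj => by
    rw [coeff_derivative, hPcoeff0 (j+1) (by omega), zero_mul]
  have hdPm : (derivative P).coeff m = (m:ℝ) + 1 := by
    rw [coeff_derivative, hPcoeff]; push_cast; ring
  have hBc : B.coeff m = 1 := by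
    have := hBm.coeff_natDegree; rwa [hBdeg] at this
  have hBc0 : ∀ j, m < j → B.coeff j = 0 := fun j hj =>
    coeff_eq_zero_of_natDegree_lt (by omega)
  refine ⟨C (2⁻¹:ℝ) * (C 3 * derivative P + C (d:ℝ) * B),
    C (2⁻¹:ℝ) * ((C (d:ℝ) * B + derivative P) * (P + C s * (X + C s)^d)),
    ?_, ?_, ?_, ?_, ?_, ?_⟩
  · -- degree of f
    have hF1deg : (C (3:ℝ) * derivative P + C ((d:ℕ):ℝ) * B).degree = (m:ℕ) := by
      apply deg_aux_hlc
      · intro j hj; simp [coeff_add, coeff_C_mul, hdP0 j hj, hBc0 j hj]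
      · simp only [coeff_add, coeff_C_mul, hdPm, hBc, mul_one]
        positivity
    rw [degree_mul, degree_C (by norm_num : (2⁻¹:ℝ) ≠ 0), hF1deg, zero_add]
  · -- degree of g
    have hF2deg : (C ((d:ℕ):ℝ) * B + derivative P).degree = (m:ℕ) := by
      apply deg_aux_hlc
      · intro j hj; simp [coeff_add, coeff_C_mul, hdP0 j hj, hBc0 j hj]
      · simp only [coeff_add, coeff_C_mul, hdPm, hBc, mul_one]
        positivity
    have hpowdeg : ((X + C s)^d).natDegree = d := by
      rw [natDegree_pow, natDegree_X_add_C, mul_one]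
    have hpowc : ((X + C s)^d).coeff d = 1 := by
      have := ((monic_X_add_C s).pow d).coeff_natDegree; rwa [hpowdeg] at this
    have hPd : 0 ≤ P.coeff d := by
      rcases eq_or_lt_of_le hdm with h | h
      · rw [← h, hPcoeff]; norm_num
      · rw [hPcoeff0 d h]
    have hGdeg : (P + C s * (X + C s)^d).degree = ((d:ℕ) : WithBot ℕ) := by
      apply deg_aux_hlc
      · intro j hj
        rw [coeff_add, coeff_C_mul, hPcoeff0 j (by omega),
          coeff_eq_zero_of_natDegree_lt (by omega : ((X + C s)^d).natDegree < j)]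
        ring
      · rw [coeff_add, coeff_C_mul, hpowc, mul_one]
        positivity
    rw [degree_mul, degree_mul, degree_C (by norm_num : (2⁻¹:ℝ) ≠ 0), hF2deg, hGdeg, zero_add,
      ← Nat.cast_add]
    congr 1
    omega
  · -- first identity
    have h2 : (2:ℝ[X]) = C (2:ℝ) := (map_ofNat C 2).symm
    have h2C : (2:ℝ[X]) * C (2⁻¹:ℝ) = 1 := by rw [h2, ← C_mul]; norm_num
    have h3 : (C (3:ℝ) : ℝ[X]) = 3 := map_ofNat C 3
    calc 2 * Q * (C (2⁻¹:ℝ) * (C 3 * derivative P + C (d:ℝ) * B))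
        = (2 * C (2⁻¹:ℝ)) * (Q * (C 3 * derivative P + C (d:ℝ) * B)) := by ring
      _ = Q * (C 3 * derivative P + C (d:ℝ) * B) := by rw [h2C, one_mul]
      _ = 2 * Q * derivative P + P * derivative Q := by
          rw [hdQ, hP', hQ, hP, h3, C_neg]; ring
  · -- second identity
    have h2 : (2:ℝ[X]) = C (2:ℝ) := (map_ofNat C 2).symm
    have h2C : (2:ℝ[X]) * C (2⁻¹:ℝ) = 1 := by rw [h2, ← C_mul]; norm_num
    calc 2 * Q * (C (2⁻¹:ℝ) * ((C (d:ℝ) * B + derivative P) * (P + C s * (X + C s)^d)))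
        = (2 * C (2⁻¹:ℝ)) * (Q * ((C (d:ℝ) * B + derivative P) * (P + C s * (X + C s)^d))) := by
          ring
      _ = Q * ((C (d:ℝ) * B + derivative P) * (P + C s * (X + C s)^d)) := by rw [h2C, one_mul]
      _ = derivative Q * (P ^ 2 - Q) := by
          rw [hdQ, hP', hQ, hP, C_neg]; ring
  · -- complex roots of Q are real
    intro z hz
    rw [hQ, hB] at hz
    simp only [map_mul, map_pow, map_prod, map_neg, map_add, map_sub, aeval_C, aeval_X,
      Complex.coe_algebraMap] at hz
    rcases mul_eq_zero.mp hz with h | h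
    · rcases mul_eq_zero.mp h with h | h
      · exfalso
        have : (-s : ℝ) = (0:ℝ) := by exact_mod_cast h
        linarith
      · have hz0 : z + (s:ℂ) = 0 := pow_eq_zero_iff (by omega) |>.mp h
        have := congrArg Complex.im hz0
        simpa using this
    · obtain ⟨i, _, hi⟩ := Finset.prod_eq_zero_iff.mp h
      have hz0 : z = (((i:ℝ) + 1 : ℝ) : ℂ) := by
        have := sub_eq_zero.mp hi
        exact_mod_cast this
      rw [hz0]
      simp
  · -- the intervals
    intro i lo hi hlo hhi
    obtain ⟨j, hj⟩ : ∃ j : ℕ, j = if m % 2 = 0 then 2*(i:ℕ)+1 else 2*(i:ℕ)+2 := ⟨_, rfl⟩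
    have hi2 := i.isLt
    have hj1 : 1 ≤ j := by rw [hj]; split <;> omega
    have hjm : j + 1 ≤ m := by rw [hj]; split_ifs with hpar <;> omega
    have hlo' : lo = (j:ℝ) := by
      rw [hlo, hj]; split_ifs <;> push_cast <;> ring
    have hhi' : hi = ((j+1:ℕ):ℝ) := by rw [hhi, hlo']; push_cast; ring
    have hodd : Odd (m - j) := by
      rw [Nat.odd_iff, hj]; split_ifs with h <;> omega
    -- eval helpers
    have hBroot : ∀ t : ℕ, 1 ≤ t → t ≤ m → B.eval (t:ℝ) = 0 := by
      intro t h1 h2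
      rw [hB, eval_prod]
      apply Finset.prod_eq_zero (Finset.mem_range.mpr (show t-1 < m by omega))
      simp only [eval_sub, eval_X, eval_C]
      rw [Nat.cast_sub h1]
      push_cast
      ring
    have hBderiv : ∀ t : ℕ, 1 ≤ t → t ≤ m → (derivative B).eval (t:ℝ) ≠ 0 := by
      intro t h1 h2
      have hmem : t - 1 ∈ Finset.range m := Finset.mem_range.mpr (by omega)
      have hc : (((t-1:ℕ):ℝ)+1) = (t:ℝ) := by rw [Nat.cast_sub h1]; push_cast; ring
      have hsplit : B = (X - C (((t-1:ℕ):ℝ)+1)) *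
          ∏ i ∈ (Finset.range m).erase (t-1), (X - C ((i:ℝ)+1)) := by
        rw [hB]; exact (Finset.mul_prod_erase _ (fun i : ℕ => X - C ((i:ℝ)+1)) hmem).symm
      rw [hsplit, derivative_mul]
      simp only [derivative_sub, derivative_X, derivative_C, sub_zero, one_mul, eval_add,
        eval_mul, eval_sub, eval_X, eval_C, hc, sub_self, zero_mul, add_zero]
      rw [eval_prod]
      refine Finset.prod_ne_zero_iff.mpr fun k hk => ?_
      obtain ⟨hne, hklt⟩ := Finset.mem_erase.mp hk
      simp only [eval_sub, eval_X, eval_C]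
      have hne' : (t:ℕ) ≠ k + 1 := by omega
      intro hcon
      apply hne'
      have : (t:ℝ) = (k:ℝ) + 1 := by linarith
      exact_mod_cast this
    have hQeval : ∀ x : ℝ, Q.eval x = -s * (x+s)^(d+1) * B.eval x := by
      intro x; rw [hQ]; simp
    have hdQeval : ∀ x : ℝ, (derivative Q).eval x =
        -s * (x+s)^d * ((d:ℝ) * B.eval x + (B.eval x + (x+s) * (derivative B).eval x)) := by
      intro x; rw [hdQ, hP']; simp
    have hBneg : ∀ x : ℝ, (j:ℝ) < x → x < (j:ℝ)+1 → B.eval x < 0 := by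
      intro x hx1 hx2
      rw [hB, eval_prod]
      simp only [eval_sub, eval_X, eval_C]
      have hsplit : ∏ k ∈ Finset.range m, (x - ((k:ℝ)+1)) =
          (∏ k ∈ Finset.Ico 0 j, (x - ((k:ℝ)+1))) * ∏ k ∈ Finset.Ico j m, (x - ((k:ℝ)+1)) := by
        rw [Finset.prod_Ico_consecutive _ (Nat.zero_le j) (by omega), ← Finset.range_eq_Ico]
      rw [hsplit]
      apply mul_neg_of_pos_of_neg
      · apply Finset.prod_pos
        intro k hk
        have h1 : k + 1 ≤ j := by have := (Finset.mem_Ico.mp hk).2; omega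
        have h2 : ((k:ℝ)+1) ≤ (j:ℝ) := by exact_mod_cast h1
        linarith
      · apply prod_neg_of_odd_hlc
        · intro k hk
          have h1 : j ≤ k := (Finset.mem_Ico.mp hk).1
          have h2 : (j:ℝ) ≤ (k:ℝ) := by exact_mod_cast h1
          linarith
        · rwa [Nat.card_Ico]
    have hj1R : (1:ℝ) ≤ (j:ℝ) := by exact_mod_cast hj1
    have hu : ∀ x : ℝ, (j:ℝ) < x → 0 < x + s := fun x hx => by linarith
    have hsne : -s ≠ 0 := by intro h; linarith [neg_eq_zero.mp h]
    refine ⟨?_, ?_, ?_, ?_, ?_, ?_⟩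
    · rw [hlo', hQeval, hBroot j hj1 (by omega)]; ring
    · have hkey : (derivative Q).eval lo =
          -s * ((j:ℝ)+s)^d * (((j:ℝ)+s) * (derivative B).eval (j:ℝ)) := by
        rw [hlo', hdQeval, hBroot j hj1 (by omega)]; ring
      rw [hkey]
      have hup : (0:ℝ) < (j:ℝ) + s := by linarith
      exact mul_ne_zero (mul_ne_zero hsne (pow_ne_zero _ (by positivity)))
        (mul_ne_zero (by positivity) (hBderiv j hj1 (by omega)))
    · rw [hhi', hQeval, hBroot (j+1) (by omega) hjm]; ring
    · have hkey : (derivative Q).eval hi =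
          -s * (((j+1:ℕ):ℝ)+s)^d * ((((j+1:ℕ):ℝ)+s) * (derivative B).eval ((j+1:ℕ):ℝ)) := by
        rw [hhi', hdQeval, hBroot (j+1) (by omega) hjm]; ring
      rw [hkey]
      have hup : (0:ℝ) < ((j+1:ℕ):ℝ) + s := by positivity
      exact mul_ne_zero (mul_ne_zero hsne (pow_ne_zero _ (by positivity)))
        (mul_ne_zero (by positivity) (hBderiv (j+1) (by omega) hjm))
    · -- positivity on the interior
      intro x hx
      obtain ⟨hx1, hx2⟩ := hx
      rw [hlo'] at hx1
      rw [hhi', Nat.cast_add, Nat.cast_one] at hx2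
      have hBx : B.eval x < 0 := hBneg x hx1 hx2
      have hux : 0 < x + s := hu x hx1
      constructor
      · rw [hQeval]
        nlinarith [mul_pos (mul_pos hs0 (pow_pos hux (d+1))) (neg_pos.mpr hBx)]
      · have hPeval : P.eval x = (x+s) * B.eval x := by rw [hP]; simp
        have hBabs : |B.eval x| ≤ ((m:ℝ)+1)^m := by
          rw [hB, eval_prod]
          simp only [eval_sub, eval_X, eval_C]
          rw [Finset.abs_prod]
          calc ∏ k ∈ Finset.range m, |x - ((k:ℝ)+1)|
              ≤ ∏ _k ∈ Finset.range m, ((m:ℝ)+1) := by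
                apply Finset.prod_le_prod (fun k _ => abs_nonneg _)
                intro k hk
                have hkm : (k:ℝ) < m := by exact_mod_cast Finset.mem_range.mp hk
                have hjmR : (j:ℝ) + 1 ≤ m := by exact_mod_cast hjm
                rw [abs_le]
                constructor <;> nlinarith
            _ = ((m:ℝ)+1)^m := by rw [Finset.prod_const, Finset.card_range]
        obtain ⟨e, he⟩ : ∃ e, d = e + 2 := ⟨d - 2, by omega⟩
        have h1e : (1:ℝ) ≤ (x+s)^e := one_le_pow₀ (by linarith)
        have h2e : s ≤ x + s := by linarith
        have e1 : s * (x+s)^d = s * ((x+s)^e * ((x+s)*(x+s))) := by rw [he]; ring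
        have e2' : s*(x+s) ≤ (x+s)*(x+s) := mul_le_mul_of_nonneg_right h2e hux.le
        have e2'' : (x+s)*(x+s) ≤ (x+s)^e * ((x+s)*(x+s)) :=
          le_mul_of_one_le_left (by positivity) h1e
        have e2 : s*(s*(x+s)) ≤ s * ((x+s)^e * ((x+s)*(x+s))) :=
          mul_le_mul_of_nonneg_left (le_trans e2' e2'') hs0.le
        have hss : s ≤ s*s := by nlinarith
        have e3 : ((m:ℝ)+1)^m < s*s := by linarith
        have e4 : -(B.eval x) ≤ ((m:ℝ)+1)^m := by
          have := abs_le.mp hBabs; linarith [this.1]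
        have e5 : -(B.eval x)*(x+s) ≤ ((m:ℝ)+1)^m*(x+s) :=
          mul_le_mul_of_nonneg_right e4 hux.le
        have e6 : ((m:ℝ)+1)^m * (x+s) < s*s*(x+s) := by nlinarith
        have key : 0 < (x+s)*B.eval x + s*(x+s)^d := by
          rw [e1]; nlinarith
        have hfactor : (P.eval x)^2 - Q.eval x =
            ((x+s)*B.eval x) * ((x+s)*B.eval x + s*(x+s)^d) := by
          rw [hPeval, hQeval]; ring
        rw [hfactor]
        exact mul_neg_of_neg_of_pos (mul_neg_of_pos_of_neg hux hBx) key
    · -- f nonvanishing at interior critical points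
      intro α hα hQ'
      obtain ⟨hα1, hα2⟩ := hα
      rw [hlo'] at hα1
      rw [hhi', Nat.cast_add, Nat.cast_one] at hα2
      have hBα : B.eval α < 0 := hBneg α hα1 hα2
      have huα : 0 < α + s := hu α hα1
      rw [hdQeval] at hQ'
      have hrel : (d:ℝ) * B.eval α + (B.eval α + (α+s) * (derivative B).eval α) = 0 := by
        rcases mul_eq_zero.mp hQ' with h | h
        · exfalso
          rcases mul_eq_zero.mp h with h | h
          · exact hsne h
          · exact pow_ne_zero _ (by positivity) h
        · exact h
      have hfeval : (C (2⁻¹:ℝ) * (C 3 * derivative P + C (d:ℝ) * B)).eval α =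
          -(d:ℝ) * B.eval α := by
        rw [hP']
        simp only [eval_mul, eval_add, eval_C, eval_X]
        linear_combination (3/2 : ℝ) * hrel
      rw [hfeval]
      have hd3 : (3:ℝ) ≤ (d:ℝ) := by exact_mod_cast (by omega : 3 ≤ d)
      nlinarith
end

section
/- Let m ≥ 4 be an integer and set n = 2m. There exists s₀ > 0 such that for every real s ≥ s₀, setting P(x) = (x + s)·∏_{i=1}^{m}(x - i) and Q(x) = (x + s)^{m+2}·∏_{i=1}^{m}(x - i), the following hold: there exist real polynomials f of degree m and g of degree 2m with 2·Q·f = 2·Q·P' + P·Q' and 2·Q·g = Q'·(P² - Q); all complex roots of Q are real; and for each i = 1, …, ⌊(2m-1)/4⌋, the interval I_i (equal to [2i-1, 2i] if m is odd and to [2i, 2i+1] if m is even) has endpoints that are simple roots of Q, Q(x) > 0 and P(x)² - Q(x) < 0 for all x in the interior of I_i, and f(α) ≠ 0 for every α in the interior of I_i with Q'(α) = 0. (This proves the lower bound H(m, 2m) ≥ ⌊(2m-1)/4⌋.) -/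
open Polynomial Finset

/-- Product of negative reals over a finset of even cardinality is positive. -/
lemma aux_prod_neg_even {ι : Type*} (s : Finset ι) (f : ι → ℝ)
    (h : ∀ i ∈ s, f i < 0) (he : Even s.card) : 0 < ∏ i ∈ s, f i := by
  have h1 : ∏ i ∈ s, f i = (-1 : ℝ) ^ s.card * ∏ i ∈ s, (-f i) := by
    rw [← Finset.prod_const, ← Finset.prod_mul_distrib]
    exact Finset.prod_congr rfl fun i _ => by ring
  rw [h1, he.neg_one_pow, one_mul]
  exact Finset.prod_pos fun i hi => by linarith [h i hi]

set_option maxHeartbeats 2000000 in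
/-- Lower bound for `n = 2m`, `m ≥ 4`: with `P(x) = (x+s)·∏_{i=1}^m (x-i)` and
`Q(x) = (x+s)^(m+2)·∏_{i=1}^m (x-i)` for large `s`, the associated Liénard system of
type `(m, 2m)` has `⌊(2m-1)/4⌋` hyperelliptic limit cycles, one over each interval
`[2i-1, 2i]` (`m` odd) resp. `[2i, 2i+1]` (`m` even), `i = 1, …, ⌊(2m-1)/4⌋`; hence
`H(m, 2m) ≥ ⌊(2m-1)/4⌋`. -/
theorem lower_bound_n_eq_2m
    (m : ℕ) (hm : 4 ≤ m) :
    ∃ s₀ : ℝ, 0 < s₀ ∧ ∀ s : ℝ, s₀ ≤ s →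
      ∀ P Q : ℝ[X],
        P = (X + C s) * ∏ i ∈ Finset.range m, (X - C ((i : ℝ) + 1)) →
        Q = (X + C s) ^ (m + 2) * ∏ i ∈ Finset.range m, (X - C ((i : ℝ) + 1)) →
        ∃ f g : ℝ[X],
          f.degree = (m : ℕ) ∧ g.degree = ((2 * m : ℕ) : WithBot ℕ) ∧
          2 * Q * f = 2 * Q * derivative P + P * derivative Q ∧
          2 * Q * g = derivative Q * (P ^ 2 - Q) ∧
          (∀ z : ℂ, Polynomial.aeval z Q = 0 → z.im = 0) ∧
          (∀ i : Fin ((2 * m - 1) / 4),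
            ∀ lo hi : ℝ,
              lo = (if m % 2 = 1 then (2 * (i : ℕ) + 1 : ℝ) else (2 * (i : ℕ) + 2 : ℝ)) →
              hi = lo + 1 →
              Q.eval lo = 0 ∧ (derivative Q).eval lo ≠ 0 ∧
              Q.eval hi = 0 ∧ (derivative Q).eval hi ≠ 0 ∧
              (∀ x ∈ Set.Ioo lo hi, 0 < Q.eval x ∧ (P.eval x) ^ 2 - Q.eval x < 0) ∧
              (∀ α ∈ Set.Ioo lo hi, (derivative Q).eval α = 0 → f.eval α ≠ 0)) := by
  obtain ⟨k, hk⟩ : ∃ k, m = k + 4 := ⟨m - 4, by omega⟩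
  have hmpos : (0:ℝ) < (m:ℝ) := by exact_mod_cast Nat.pos_of_ne_zero (by omega)
  refine ⟨(m : ℝ), hmpos, ?_⟩
  intro s hs P Q hP hQ
  have hs0 : (0:ℝ) < s := lt_of_lt_of_le hmpos hs
  set R : ℝ[X] := ∏ i ∈ range m, (X - C ((i:ℝ)+1)) with hR
  -- basic facts about R
  have hRmonic : R.Monic := monic_prod_of_monic _ _ fun i _ => monic_X_sub_C _
  have hRdeg : R.natDegree = m := by
    rw [hR, natDegree_prod _ _ fun i _ => X_sub_C_ne_zero _]
    simp only [natDegree_X_sub_C]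
    simp
  have hRne : R ≠ 0 := hRmonic.ne_zero
  have hRdegree : R.degree = ((m : ℕ) : WithBot ℕ) := by
    rw [degree_eq_natDegree hRne, hRdeg]
  have hRcoeff_top : R.coeff (k+4) = 1 := by
    have := hRmonic.coeff_natDegree
    rwa [hRdeg, hk] at this
  have hRnext : R.coeff (k+3) = -∑ i ∈ range m, ((i:ℝ)+1) := by
    have h1 := prod_X_sub_C_nextCoeff (s := range m) (fun i => (i:ℝ)+1)
    rw [← hR, nextCoeff_of_natDegree_pos (by rw [hRdeg]; omega), hRdeg,
      show m - 1 = k + 3 by omega] at h1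
    exact h1
  have hRder3 : (derivative R).coeff (k+3) = (k:ℝ)+4 := by
    rw [coeff_derivative, hRcoeff_top]; push_cast; ring
  have hRder4 : (derivative R).coeff (k+4) = 0 := by
    rw [coeff_derivative, coeff_eq_zero_of_natDegree_lt (by rw [hRdeg]; omega), zero_mul]
  have hRderle : (derivative R).degree ≤ ((k+3 : ℕ) : WithBot ℕ) := by
    rw [← Polynomial.natDegree_le_iff_degree_le]
    have := natDegree_derivative_le R
    omega
  have hXRder : ((X + C s) * derivative R).coeff (k+4) = (k:ℝ)+4 := by
    rw [add_mul, coeff_add, coeff_X_mul, coeff_C_mul, hRder3, hRder4, mul_zero, add_zero]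
  have hXRderle : ((X + C s) * derivative R).degree ≤ ((m:ℕ) : WithBot ℕ) := by
    apply le_trans (degree_mul_le _ _)
    calc degree (X + C s) + degree (derivative R) ≤ 1 + ((k+3:ℕ) : WithBot ℕ) :=
          add_le_add (le_of_eq (degree_X_add_C s)) hRderle
      _ = ((m:ℕ) : WithBot ℕ) := by norm_cast; omega
  -- definitions of f and g
  set f : ℝ[X] := C (((m:ℝ)+4)/2) * R + C (3/2 : ℝ) * ((X + C s) * derivative R) with hf
  set B : ℝ[X] := C ((m:ℝ)+2) * R + (X + C s) * derivative R with hB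
  set D : ℝ[X] := R - (X + C s) ^ m with hD
  set g : ℝ[X] := C (1/2 : ℝ) * ((X + C s) * (B * D)) with hg
  -- degree of f
  have hfdeg : f.degree = ((m : ℕ) : WithBot ℕ) := by
    apply degree_eq_of_le_of_coeff_ne_zero
    · apply le_trans (degree_add_le _ _)
      apply max_le
      · apply le_trans (degree_mul_le _ _)
        calc degree (C (((m:ℝ)+4)/2)) + degree R ≤ 0 + ((m:ℕ) : WithBot ℕ) :=
              add_le_add degree_C_le (le_of_eq hRdegree)
          _ = ((m:ℕ) : WithBot ℕ) := zero_add _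
      · apply le_trans (degree_mul_le _ _)
        calc degree (C (3/2:ℝ)) + degree ((X + C s) * derivative R)
              ≤ 0 + ((m:ℕ) : WithBot ℕ) := add_le_add degree_C_le hXRderle
          _ = _ := zero_add _
    · rw [show m = k+4 from hk]
      rw [hf, coeff_add, coeff_C_mul, coeff_C_mul, hXRder,
        show R.coeff (k+4) = 1 from hRcoeff_top, hk]
      push_cast; intro h; nlinarith [h]
  -- degree of B
  have hBdeg : B.degree = ((m : ℕ) : WithBot ℕ) := by
    apply degree_eq_of_le_of_coeff_ne_zero
    · apply le_trans (degree_add_le _ _)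
      apply max_le
      · apply le_trans (degree_mul_le _ _)
        calc degree (C ((m:ℝ)+2)) + degree R ≤ 0 + ((m:ℕ) : WithBot ℕ) :=
              add_le_add degree_C_le (le_of_eq hRdegree)
          _ = ((m:ℕ) : WithBot ℕ) := zero_add _
      · exact hXRderle
    · rw [show m = k+4 from hk]
      rw [hB, coeff_add, coeff_C_mul, hXRder,
        show R.coeff (k+4) = 1 from hRcoeff_top, hk]
      push_cast; intro h; nlinarith [h]
  -- degree of D
  have hsum_pos : (0:ℝ) < ∑ i ∈ range m, ((i:ℝ)+1) := by
    apply Finset.sum_pos (fun i _ => by positivity)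
    exact ⟨0, Finset.mem_range.2 (by omega)⟩
  have hDcoeff : D.coeff (k+3) = -∑ i ∈ range m, ((i:ℝ)+1) - s * ((k:ℝ)+4) := by
    rw [hD, coeff_sub, hRnext, coeff_X_add_C_pow,
      show m - (k+3) = 1 by omega,
      show m.choose (k+3) = k+4 by rw [hk]; exact Nat.choose_succ_self_right _]
    push_cast; ring
  have hDcoeff_ne : D.coeff (k+3) ≠ 0 := by
    rw [hDcoeff]; intro h; nlinarith [h, hsum_pos, hs0]
  have hDlt : D.degree < ((m:ℕ) : WithBot ℕ) := by
    rw [← hRdegree]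
    have hXs : ((X + C s) ^ m).degree = ((m:ℕ) : WithBot ℕ) := by
      rw [degree_pow, degree_X_add_C]; simp
    exact degree_sub_lt (by rw [hRdegree, hXs]) hRne (by
      rw [hRmonic.leadingCoeff, ((monic_X_add_C s).pow _).leadingCoeff])
  have hDdeg : D.degree = ((k+3 : ℕ) : WithBot ℕ) := by
    apply degree_eq_of_le_of_coeff_ne_zero _ hDcoeff_ne
    rw [← Polynomial.natDegree_le_iff_degree_le]
    have hD0 : D ≠ 0 := fun h => hDcoeff_ne (by rw [h]; simp)
    have := (Polynomial.natDegree_lt_iff_degree_lt hD0).2 hDlt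
    omega
  have hgdeg : g.degree = ((2 * m : ℕ) : WithBot ℕ) := by
    rw [hg, degree_mul, degree_mul, degree_mul, degree_C (by norm_num : (1/2:ℝ) ≠ 0),
      degree_X_add_C, hBdeg, hDdeg]
    norm_cast
    omega
  -- the divisibility identities
  have hdP : derivative P = R + (X + C s) * derivative R := by
    rw [hP]; simp [derivative_mul]
  have hdQ' : derivative Q = C ((m:ℝ)+2) * (X + C s) ^ (m+1) * R + (X + C s) ^ (m+2) * derivative R := by
    rw [hQ, derivative_mul, derivative_pow]
    simp
  have hid1 : 2 * Q * f = 2 * Q * derivative P + P * derivative Q := by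
    rw [hdP, hdQ', hP, hQ, hf]
    apply Polynomial.funext
    intro x
    simp [eval_pow]
    push_cast
    ring
  have hid2 : 2 * Q * g = derivative Q * (P ^ 2 - Q) := by
    rw [hdQ', hP, hQ, hg, hB, hD]
    apply Polynomial.funext
    intro x
    simp [eval_pow]
    push_cast
    ring
  -- evaluation of Q and its derivative
  have hReval : ∀ x : ℝ, R.eval x = ∏ i ∈ range m, (x - ((i:ℝ)+1)) := by
    intro x; rw [hR]; simp [eval_prod]
  have hQeval : ∀ x : ℝ, Q.eval x = (x + s)^(m+2) * R.eval x := by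
    intro x; rw [hQ]; simp [eval_pow]
  have hdQeval : ∀ x : ℝ, (derivative Q).eval x
      = ((m:ℝ)+2) * (x+s)^(m+1) * R.eval x + (x+s)^(m+2) * (derivative R).eval x := by
    intro x; rw [hdQ']; simp [eval_pow]
  -- roots of R
  have hRroot : ∀ j : ℕ, j < m → R.eval ((j:ℝ)+1) = 0 := by
    intro j hj
    rw [hReval]
    exact Finset.prod_eq_zero (Finset.mem_range.2 hj) (by ring)
  have hRder_ne : ∀ j : ℕ, j < m → (derivative R).eval ((j:ℝ)+1) ≠ 0 := by
    intro j hj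
    have hsplit : R = (X - C ((j:ℝ)+1)) * ∏ i ∈ (range m).erase j, (X - C ((i:ℝ)+1)) :=
      (Finset.mul_prod_erase _ _ (Finset.mem_range.2 hj)).symm
    rw [hsplit, derivative_mul]
    simp only [derivative_sub, derivative_X, derivative_C, sub_zero, one_mul, eval_add,
      eval_mul, eval_sub, eval_X, eval_C, sub_self, zero_mul, add_zero]
    rw [eval_prod]
    rw [Finset.prod_ne_zero_iff]
    intro i hi
    simp only [eval_sub, eval_X, eval_C]
    have hij : i ≠ j := Finset.ne_of_mem_erase hi
    have : (i:ℝ) ≠ (j:ℝ) := by exact_mod_cast fun h => hij (Nat.cast_injective h)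
    intro h; apply this; linarith
  refine ⟨f, g, hfdeg, hgdeg, hid1, hid2, ?_, ?_⟩
  · -- all roots of Q are real
    intro z hz
    rw [hQ, hR] at hz
    simp only [map_mul, map_pow, map_prod, map_sub, map_add, aeval_X, aeval_C] at hz
    rcases mul_eq_zero.1 hz with h | h
    · have : z + (algebraMap ℝ ℂ) s = 0 := pow_eq_zero_iff (by omega) |>.1 h
      have : z = -((s:ℝ) : ℂ) := by
        simpa [eq_neg_iff_add_eq_zero] using this
      rw [this]; simp
    · obtain ⟨i, _, hi⟩ := Finset.prod_eq_zero_iff.1 h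
      have : z = (algebraMap ℝ ℂ) ((i:ℝ)+1) := by
        have := sub_eq_zero.1 hi; simpa using this
      rw [this]; simp
  · -- the intervals
    intro i lo hi hlo hhi
    -- find the natural number l with lo = l + 1
    obtain ⟨l, hlval, hl1, hlm, hpar⟩ :
        ∃ l : ℕ, lo = (l:ℝ)+1 ∧ 1 ≤ l + 1 ∧ l + 1 < m ∧ (m - (l+1)) % 2 = 0 := by
      have hil := i.isLt
      by_cases hodd : m % 2 = 1
      · refine ⟨2 * (i:ℕ), by rw [hlo, if_pos hodd]; push_cast; ring, by omega, by omega, by omega⟩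
      · refine ⟨2 * (i:ℕ) + 1, by rw [hlo, if_neg hodd]; push_cast; ring, by omega, by omega, by omega⟩
    have hhival : hi = ((l+1:ℕ):ℝ)+1 := by rw [hhi, hlval]; push_cast; ring
    have hlo_pos : (0:ℝ) < lo := by rw [hlval]; positivity
    have hlos : (0:ℝ) < lo + s := by linarith
    have hhis : (0:ℝ) < hi + s := by rw [hhi]; linarith
    -- positivity of R on the open interval
    have hRpos : ∀ x ∈ Set.Ioo lo hi, 0 < R.eval x := by
      intro x hx
      obtain ⟨hx1, hx2⟩ := hx
      rw [hlval] at hx1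
      rw [hhival] at hx2
      rw [hReval]
      rw [← Finset.prod_range_mul_prod_Ico _ (show l + 1 ≤ m by omega)]
      apply mul_pos
      · apply Finset.prod_pos
        intro j hj
        have hjl : j < l + 1 := Finset.mem_range.1 hj
        have : (j:ℝ) + 1 ≤ (l:ℝ) + 1 := by
          have : (j:ℝ) ≤ (l:ℝ) := by exact_mod_cast Nat.lt_succ_iff.1 hjl
          linarith
        linarith
      · apply aux_prod_neg_even
        · intro j hj
          obtain ⟨hj1, hj2⟩ := Finset.mem_Ico.1 hj
          have : ((l:ℝ) + 1) + 1 ≤ (j:ℝ) + 1 := by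
            have : ((l+1:ℕ):ℝ) ≤ (j:ℝ) := by exact_mod_cast hj1
            push_cast at this ⊢; linarith
          have hx2' : x < ((l:ℝ)+1)+1 := by push_cast at hx2; linarith
          linarith
        · rw [Nat.card_Ico]
          exact (Nat.even_iff).2 hpar
    -- bounds on x within the interval
    have hxbound : ∀ x ∈ Set.Ioo lo hi, 1 ≤ x ∧ x ≤ (m:ℝ) := by
      intro x hx
      obtain ⟨hx1, hx2⟩ := hx
      rw [hlval] at hx1; rw [hhival] at hx2
      constructor
      · have : (0:ℝ) ≤ (l:ℝ) := Nat.cast_nonneg l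
        linarith
      · have : ((l+1:ℕ):ℝ) + 1 ≤ (m:ℝ) := by exact_mod_cast Nat.succ_le_of_lt hlm
        linarith
    -- key strict bound R(x) < (x+s)^m
    have hRlt : ∀ x ∈ Set.Ioo lo hi, R.eval x < (x + s)^m := by
      intro x hx
      obtain ⟨hx1m, hxmm⟩ := hxbound x hx
      obtain ⟨hx1, hx2⟩ := hx
      have hxs : (m:ℝ) + 1 ≤ x + s := by linarith
      calc R.eval x ≤ |R.eval x| := le_abs_self _
        _ = ∏ j ∈ range m, |x - ((j:ℝ)+1)| := by rw [hReval]; exact Finset.abs_prod _ _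
        _ < ∏ _j ∈ range m, (x + s) := by
            have hpos : ∀ j ∈ range m, 0 < |x - ((j:ℝ)+1)| := by
              intro j hj
              rw [abs_pos, sub_ne_zero]
              rw [hlval] at hx1; rw [hhival] at hx2
              rcases le_or_gt ((j:ℝ)+1) ((l:ℝ)+1) with h | h
              · intro he; rw [he] at hx1; linarith
              · have hlj : l < j := by
                  have : (l:ℝ) < (j:ℝ) := by linarith
                  exact_mod_cast this
                have h2 : ((l:ℝ)+1) ≤ (j:ℝ) := by
                  have : ((l+1:ℕ):ℝ) ≤ (j:ℝ) := by exact_mod_cast Nat.succ_le_of_lt hlj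
                  push_cast at this; linarith
                intro he; rw [he] at hx2
                push_cast at hx2
                linarith
            have hlt : ∀ j ∈ range m, |x - ((j:ℝ)+1)| < x + s := by
              intro j hj
              have hjm : (j:ℝ) + 1 ≤ (m:ℝ) := by
                have : j < m := Finset.mem_range.1 hj
                exact_mod_cast Nat.succ_le_of_lt this
              rw [abs_lt]
              constructor <;> linarith
            have h0m : 0 ∈ range m := Finset.mem_range.2 (by omega)
            exact Finset.prod_lt_prod hpos (fun j hj => (hlt j hj).le) ⟨0, h0m, hlt 0 h0m⟩
        _ = (x + s)^m := by rw [Finset.prod_const, Finset.card_range]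
    -- assemble the five interval conditions
    have hlom : l < m := by omega
    have hhim : l + 1 < m := hlm
    have hQlo : Q.eval lo = 0 := by
      rw [hQeval, hlval, hRroot l hlom, mul_zero]
    have hQhi : Q.eval hi = 0 := by
      rw [hQeval, hhival, hRroot (l+1) hhim, mul_zero]
    have hdQlo : (derivative Q).eval lo ≠ 0 := by
      rw [hdQeval, hlval, hRroot l hlom]
      have := hRder_ne l hlom
      rw [← hlval]
      intro h
      apply this
      have h2 : (lo + s)^(m+2) * (derivative R).eval ((l:ℝ)+1) = 0 := by
        rw [hlval] at h ⊢; linarith [h]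
      rcases mul_eq_zero.1 h2 with h3 | h3
      · exact absurd h3 (pow_ne_zero _ (ne_of_gt hlos))
      · exact h3
    have hdQhi : (derivative Q).eval hi ≠ 0 := by
      rw [hdQeval, hhival, hRroot (l+1) hhim]
      have := hRder_ne (l+1) hhim
      rw [← hhival]
      intro h
      apply this
      have h2 : (hi + s)^(m+2) * (derivative R).eval (((l+1:ℕ):ℝ)+1) = 0 := by
        rw [hhival] at h ⊢; linarith [h]
      rcases mul_eq_zero.1 h2 with h3 | h3
      · exact absurd h3 (pow_ne_zero _ (ne_of_gt hhis))
      · exact h3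
    refine ⟨hQlo, hdQlo, hQhi, hdQhi, ?_, ?_⟩
    · intro x hx
      have hr := hRpos x hx
      obtain ⟨hx1, hx2⟩ := hx
      have hxs : (0:ℝ) < x + s := by linarith
      constructor
      · rw [hQeval]; positivity
      · have hlt := hRlt x ⟨hx1, hx2⟩
        rw [hP, hQ]
        simp only [eval_mul, eval_pow, eval_add, eval_X, eval_C]
        have hpow : (x + s)^(m+2) = (x+s)^m * (x+s)^2 := by rw [← pow_add]
        rw [hpow]
        have hkey : ((x+s)^2 * R.eval x) * R.eval x < ((x+s)^2 * R.eval x) * (x+s)^m :=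
          mul_lt_mul_of_pos_left hlt (by positivity)
        nlinarith [hkey]
    · intro α hα hcrit
      have hr := hRpos α hα
      obtain ⟨hα1, hα2⟩ := hα
      have hαs : (0:ℝ) < α + s := by linarith
      rw [hdQeval] at hcrit
      have hfac : (α+s)^(m+1) * (((m:ℝ)+2) * R.eval α + (α+s) * (derivative R).eval α) = 0 := by
        rw [show (α+s)^(m+2) = (α+s)^(m+1) * (α+s) from pow_succ _ _] at hcrit
        linarith [hcrit]
      have h2 : ((m:ℝ)+2) * R.eval α + (α+s) * (derivative R).eval α = 0 := by
        rcases mul_eq_zero.1 hfac with h3 | h3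
        · exact absurd h3 (pow_ne_zero _ (ne_of_gt hαs))
        · exact h3
      rw [hf]
      simp only [eval_add, eval_mul, eval_C, eval_X]
      have : ((m:ℝ)+4)/2 * R.eval α + 3/2 * ((α + s) * (derivative R).eval α)
          = -(((m:ℝ)+1)) * R.eval α := by linarith [h2]
      rw [this]
      have hm1 : (0:ℝ) < (m:ℝ) + 1 := by positivity
      nlinarith [hr, hm1]
end
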